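/- arXiv:0812.1257 — 6 statements merged into one kernel-verified Lean document; each statement's English description precedes it below -/
import Mathlib

section
/- Let λ be a finite Borel measure on a compact metric space X, let T : X → Y be a measurable map into a measurable space Y whose σ-algebra is countably generated and contains all singleton sets, let μ be a σ-finite measure on Y with T_*λ ≪ μ, and let (λ_t)_{t∈Y} be a (T,μ)-disintegration of λ. Then the set of atoms of the disintegration, X_a = {x ∈ X : λ_{T(x)}({x}) > 0}, is measurable with respect to the completion of λ (i.e., X_a is a λ-null-measurable set). -/
open MeasureTheory ENNReal Filter

/-- A `(T, μ)`-disintegration of a measure `ν` on `X`: a family `(lam t)` of measures on `X`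
concentrated on the fibres of `T`, measurable (w.r.t. the completion of `μ`) in `t`, and
integrating back to `ν`. -/
def IsDisintegration {X Y : Type*} [MeasurableSpace X] [MeasurableSpace Y]
    (ν : Measure X) (T : X → Y) (μ : Measure Y) (lam : Y → Measure X) : Prop :=
  (∀ᵐ t ∂μ, lam t ((T ⁻¹' {t})ᶜ) = 0) ∧
  (∀ f : X → ℝ≥0∞, Measurable f →
      AEMeasurable (fun t => ∫⁻ x, f x ∂(lam t)) μ) ∧
  (∀ f : X → ℝ≥0∞, Measurable f →
      ∫⁻ x, f x ∂ν = ∫⁻ t, ∫⁻ x, f x ∂(lam t) ∂μ)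

theorem atoms_of_disintegration_nullMeasurable
    {X Y : Type*} [MetricSpace X] [CompactSpace X]
    [MeasurableSpace X] [BorelSpace X]
    [MeasurableSpace Y] [MeasurableSpace.CountablyGenerated Y] [MeasurableSingletonClass Y]
    (ν : Measure X) [IsFiniteMeasure ν]
    (T : X → Y) (hT : Measurable T)
    (μ : Measure Y) [SigmaFinite μ]
    (habs : ν.map T ≪ μ)
    (lam : Y → Measure X) (hdis : IsDisintegration ν T μ lam) :
    NullMeasurableSet {x : X | 0 < lam (T x) {x}} ν := by
  classical
  -- a countable separating family of measurable sets
  obtain ⟨S, hSm, hSsep⟩ :=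
    exists_seq_separating X MeasurableSet.empty (Set.univ : Set X)
  -- the "cells" of the finite partitions generated by the `S k`
  set C : ℕ → X → Set X :=
    fun n x => ⋂ k ∈ Finset.range n, {y | y ∈ S k ↔ x ∈ S k} with hCdef
  have hCif : ∀ k x, {y | y ∈ S k ↔ x ∈ S k} = if x ∈ S k then S k else (S k)ᶜ := by
    intro k x
    by_cases hx : x ∈ S k <;> ext y <;> simp [hx]
  have hCm : ∀ n x, MeasurableSet (C n x) := by
    intro n x
    refine Finset.measurableSet_biInter _ fun k _ => ?_
    rw [hCif]
    split_ifs
    · exact hSm k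
    · exact (hSm k).compl
  have hCmem : ∀ n x, x ∈ C n x := by
    intro n x
    simp [hCdef]
  have hCanti : ∀ x, Antitone fun n => C n x := by
    intro x m n hmn y hy
    simp only [hCdef, Set.mem_iInter] at hy ⊢
    intro k hk
    exact hy k (Finset.mem_range.2 ((Finset.mem_range.1 hk).trans_le hmn))
  have hCinter : ∀ x, (⋂ n, C n x) = {x} := by
    intro x
    apply Set.Subset.antisymm
    · intro y hy
      simp only [Set.mem_iInter, hCdef] at hy
      have : ∀ k, y ∈ S k ↔ x ∈ S k := fun k =>
        hy (k + 1) k (Finset.mem_range.2 (Nat.lt_succ_self k))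
      exact hSsep y (Set.mem_univ y) x (Set.mem_univ x) this
    · intro y hy
      rw [Set.mem_singleton_iff] at hy
      subst hy
      exact Set.mem_iInter.2 fun n => hCmem n y
  -- basic measurability: `x ↦ lam (T x) E` is a.e.-measurable for each measurable `E`
  have hbase : ∀ E : Set X, MeasurableSet E → AEMeasurable (fun x => lam (T x) E) ν := by
    intro E hE
    have h1 : AEMeasurable (fun t => lam t E) μ := by
      have := hdis.2.1 (E.indicator 1) (measurable_one.indicator hE)
      simpa only [lintegral_indicator_one hE] using this
    exact ((h1.mono_ac habs).comp_measurable hT :)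
  -- measurability of `x ↦ lam (T x) (E ∩ C n x)`, by induction on `n`
  have hmeas : ∀ n, ∀ E : Set X, MeasurableSet E →
      AEMeasurable (fun x => lam (T x) (E ∩ C n x)) ν := by
    intro n
    induction n with
    | zero =>
      intro E hE
      have : ∀ x, E ∩ C 0 x = E := by
        intro x; simp [hCdef]
      simpa only [this] using hbase E hE
    | succ n ih =>
      intro E hE
      have key : (fun x => lam (T x) (E ∩ C (n + 1) x)) =
          fun x => (S n).indicator (fun x => lam (T x) ((E ∩ S n) ∩ C n x)) x +
            ((S n)ᶜ).indicator (fun x => lam (T x) ((E ∩ (S n)ᶜ) ∩ C n x)) x := by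
        funext x
        have hsplit : C (n + 1) x = {y | y ∈ S n ↔ x ∈ S n} ∩ C n x := by
          simp only [hCdef, Finset.range_add_one]
          rw [Finset.set_biInter_insert]
        by_cases hx : x ∈ S n
        · have h1 : {y | y ∈ S n ↔ x ∈ S n} = S n := by rw [hCif]; simp [hx]
          rw [Set.indicator_of_mem hx, Set.indicator_of_notMem (by simpa using hx),
            add_zero, hsplit, h1]
          congr 1
          ext y; simp; tauto
        · have h1 : {y | y ∈ S n ↔ x ∈ S n} = (S n)ᶜ := by rw [hCif]; simp [hx]
          rw [Set.indicator_of_notMem hx, Set.indicator_of_mem (by simpa using hx),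
            zero_add, hsplit, h1]
          congr 1
          ext y; simp; tauto
      rw [key]
      exact ((ih _ (hE.inter (hSm n))).indicator (hSm n)).add
        ((ih _ (hE.inter (hSm n).compl)).indicator (hSm n).compl)
  have hg : ∀ n, AEMeasurable (fun x => lam (T x) (C n x)) ν := by
    intro n
    have := hmeas n Set.univ MeasurableSet.univ
    simpa only [Set.univ_inter] using this
  -- a.e. finiteness of the fibre measures
  have hm1 : AEMeasurable (fun t => lam t Set.univ) μ := by
    have := hdis.2.1 (fun _ => 1) measurable_const
    simpa only [lintegral_one] using this
  have hint1 : ∫⁻ t, lam t Set.univ ∂μ ≠ ∞ := by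
    have h := hdis.2.2 (fun _ => 1) measurable_const
    simp only [lintegral_one] at h
    rw [← h]
    exact measure_ne_top ν _
  have hfinμ : ∀ᵐ t ∂μ, lam t Set.univ < ∞ := ae_lt_top' hm1 hint1
  have hfinν : ∀ᵐ x ∂ν, lam (T x) Set.univ < ∞ :=
    ae_of_ae_map hT.aemeasurable (habs.ae_le hfinμ)
  -- pointwise convergence along the cells
  have hlim : ∀ x, lam (T x) Set.univ ≠ ∞ →
      Tendsto (fun n => lam (T x) (C n x)) atTop (nhds (lam (T x) {x})) := by
    intro x hx
    have h0 : C 0 x = Set.univ := by simp [hCdef]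
    have := tendsto_measure_iInter_atTop (μ := lam (T x))
      (fun n => (hCm n x).nullMeasurableSet) (hCanti x) ⟨0, by rw [h0]; exact hx⟩
    rwa [hCinter x] at this
  -- measurable modifications and the liminf function
  choose G hGmeas hGeq using fun n => (hg n)
  set H : X → ℝ≥0∞ := fun x => liminf (fun n => G n x) atTop with hHdef
  have hHm : Measurable H := Measurable.liminf hGmeas
  have hae : ∀ᵐ x ∂ν, lam (T x) {x} = H x := by
    filter_upwards [hfinν, ae_all_iff.2 hGeq] with x hx hGx
    have h1 : (fun n => G n x) = fun n => lam (T x) (C n x) := by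
      funext n; exact (hGx n).symm
    have h2 : Tendsto (fun n => G n x) atTop (nhds (lam (T x) {x})) := by
      rw [h1]; exact hlim x hx.ne
    exact (h2.liminf_eq).symm
  have hsets : {x : X | 0 < lam (T x) {x}} =ᵐ[ν] {x : X | 0 < H x} := by
    refine Filter.eventuallyEq_set.2 ?_
    filter_upwards [hae] with x hx
    simp only [Set.mem_setOf_eq, hx]
  exact ((hHm measurableSet_Ioi).nullMeasurableSet.congr hsets.symm :)
end

section
/- Let λ₁ and λ₂ be finite Borel measures on compact metric spaces X and Y respectively, let T : X → Z and S : Y → W be measurable maps into measurable spaces Z and W whose σ-algebras are countably generated and contain all singleton sets, and let μ, ν be σ-finite measures on Z, W respectively with T_*λ₁ ≪ μ and S_*λ₂ ≪ ν. Let (λ_t^1) be a (T,μ)-disintegration of λ₁ and (λ_s^2) an (S,ν)-disintegration of λ₂, and let (λ_{t,s}^0) be any (T×S, μ⊗ν)-disintegration of the product measure λ₁ ⊗ λ₂, where T×S : X×Y → Z×W is the map (x,y) ↦ (T(x), S(y)). Then λ_{t,s}^0 = λ_t^1 ⊗ λ_s^2 for (μ⊗ν)-a.e. (t,s). -/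
open MeasureTheory ENNReal

/-!
A disintegration identifies `t ↦ lam t U` as the density of `T_* (ν|_U)` with respect to `μ`.
Since `(ν₁ ⊗ ν₂)|_{U ×ˢ V}` pushes forward under `T × S` to `T_* (ν₁|_U) ⊗ S_* (ν₂|_V)`, both
`p ↦ lam₀ p (U ×ˢ V)` and `p ↦ lam₁ p.1 U * lam₂ p.2 V` are densities of the same measure with
respect to `μ ⊗ κ`, so they agree a.e. Rectangles built from countable generating π-systems of `X`
and `Y` form a countable generating π-system of `X × Y`, so for a.e. `p` the finite measures
`lam₀ p` and `lam₁ p.1 ⊗ lam₂ p.2` agree on all of them at once.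
-/

open Set Filter MeasurableSpace

theorem Set.Countable.generatePiSystem {α : Type*} {S : Set (Set α)} (hS : S.Countable) :
    (_root_.generatePiSystem S).Countable := by
  have h : _root_.generatePiSystem S ⊆ sInter '' {F | F.Finite ∧ F ⊆ S} := by
    intro s hs
    induction hs with
    | base h => exact ⟨{_}, ⟨finite_singleton _, singleton_subset_iff.2 h⟩, sInter_singleton _⟩
    | inter _ _ _ ihs iht =>
      obtain ⟨F, ⟨hFf, hFS⟩, rfl⟩ := ihs
      obtain ⟨G, ⟨hGf, hGS⟩, rfl⟩ := iht
      exact ⟨F ∪ G, ⟨hFf.union hGf, union_subset hFS hGS⟩, sInter_union F G⟩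
  exact ((countable_ofPred_finite_subset hS).image _).mono h

theorem MeasurableSpace.exists_countable_isPiSystem_generateFrom (α : Type*)
    [m : MeasurableSpace α] [CountablyGenerated α] :
    ∃ C : Set (Set α), C.Countable ∧ IsPiSystem C ∧ univ ∈ C ∧ generateFrom C = m := by
  set G := countableGeneratingSet α
  refine ⟨insert univ (_root_.generatePiSystem G),
    (countable_countableGeneratingSet.generatePiSystem).insert _,
    (isPiSystem_generatePiSystem G).insert_univ, mem_insert _ _, le_antisymm ?_ ?_⟩
  · refine generateFrom_le ?_
    rintro s (rfl | hs)
    · exact MeasurableSet.univ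
    · exact generatePiSystem_measurableSet (fun t ht => measurableSet_countableGeneratingSet ht) s hs
  · conv_lhs => rw [← generateFrom_countableGeneratingSet (α := α)]
    exact generateFrom_mono ((subset_generatePiSystem_self G).trans (subset_insert _ _))

section FamilyExt

variable {ι α β : Type*} {l : Filter ι} [CountableInterFilter l]

theorem MeasureTheory.Measure.eventually_eq_of_forall_mem_eventually_eq [m : MeasurableSpace α]
    {ρ ρ' : ι → Measure α} {C : Set (Set α)} (hCc : C.Countable) (hCpi : IsPiSystem C)
    (huniv : univ ∈ C) (hgen : m = generateFrom C) (hfin : ∀ᶠ i in l, IsFiniteMeasure (ρ i))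
    (h : ∀ s ∈ C, ∀ᶠ i in l, ρ i s = ρ' i s) :
    ∀ᶠ i in l, ρ i = ρ' i := by
  filter_upwards [(eventually_countable_ball hCc).2 h, hfin] with i hi _
  exact ext_of_generate_finite C hgen hCpi hi (hi univ huniv)

theorem MeasureTheory.Measure.eventually_eq_of_forall_eventually_prod_eq
    [MeasurableSpace α] [CountablyGenerated α] [MeasurableSpace β] [CountablyGenerated β]
    {ρ ρ' : ι → Measure (α × β)} (hfin : ∀ᶠ i in l, IsFiniteMeasure (ρ i))
    (h : ∀ s t, MeasurableSet s → MeasurableSet t → ∀ᶠ i in l, ρ i (s ×ˢ t) = ρ' i (s ×ˢ t)) :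
    ∀ᶠ i in l, ρ i = ρ' i := by
  obtain ⟨C, hCc, hCpi, hCuniv, hCgen⟩ := exists_countable_isPiSystem_generateFrom α
  obtain ⟨D, hDc, hDpi, hDuniv, hDgen⟩ := exists_countable_isPiSystem_generateFrom β
  refine eventually_eq_of_forall_mem_eventually_eq (hCc.image2 hDc _) (hCpi.prod hDpi)
    ⟨_, hCuniv, _, hDuniv, univ_prod_univ⟩ (generateFrom_eq_prod hCgen hDgen
      ⟨fun _ => univ, fun _ => hCuniv, iUnion_const _⟩
      ⟨fun _ => univ, fun _ => hDuniv, iUnion_const _⟩).symm hfin ?_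
  rintro _ ⟨s, hs, t, ht, rfl⟩
  exact h s t (hCgen ▸ measurableSet_generateFrom hs) (hDgen ▸ measurableSet_generateFrom ht)

end FamilyExt

namespace IsDisintegration

variable {X Z : Type*} [MeasurableSpace X] [MeasurableSpace Z] {ν : Measure X} {T : X → Z}
  {μ : Measure Z} {lam : Z → Measure X} {s : Set X}

theorem measure_eq_lintegral (hd : IsDisintegration ν T μ lam) (hs : MeasurableSet s) :
    ν s = ∫⁻ t, lam t s ∂μ := by
  simpa only [lintegral_indicator_one hs] using hd.2.2 (s.indicator 1) (measurable_one.indicator hs)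

theorem aemeasurable_apply (hd : IsDisintegration ν T μ lam) (hs : MeasurableSet s) :
    AEMeasurable (fun t => lam t s) μ := by
  simpa only [lintegral_indicator_one hs] using hd.2.1 (s.indicator 1) (measurable_one.indicator hs)

theorem ae_isFiniteMeasure [IsFiniteMeasure ν] (hd : IsDisintegration ν T μ lam) :
    ∀ᵐ t ∂μ, IsFiniteMeasure (lam t) := by
  have hint : ∫⁻ t, lam t univ ∂μ ≠ ∞ := by
    rw [← hd.measure_eq_lintegral MeasurableSet.univ]
    exact measure_ne_top ν univ
  filter_upwards [ae_lt_top' (hd.aemeasurable_apply MeasurableSet.univ) hint] with t ht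
  exact ⟨ht⟩

theorem ae_apply_preimage_inter (hd : IsDisintegration ν T μ lam) :
    ∀ᵐ t ∂μ, ∀ (B : Set Z) (s : Set X), lam t (T ⁻¹' B ∩ s) = B.indicator (fun t => lam t s) t := by
  filter_upwards [hd.1] with t ht B s
  by_cases htB : t ∈ B
  · rw [indicator_of_mem htB]
    refine le_antisymm (measure_mono inter_subset_right) ?_
    calc lam t s = lam t (s ∩ T ⁻¹' {t}) := (measure_inter_conull ht).symm
      _ ≤ lam t (T ⁻¹' B ∩ s) :=
        measure_mono fun x ⟨hxs, hxt⟩ => ⟨show T x ∈ B from (mem_singleton_iff.1 hxt) ▸ htB, hxs⟩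
  · rw [indicator_of_notMem htB]
    have hsub : T ⁻¹' B ∩ s ⊆ (T ⁻¹' {t})ᶜ := fun x hx hxt =>
      htB ((mem_singleton_iff.1 hxt) ▸ hx.1)
    exact measure_mono_null hsub ht

theorem withDensity_eq_map_restrict (hd : IsDisintegration ν T μ lam) (hT : Measurable T)
    (hs : MeasurableSet s) :
    μ.withDensity (fun t => lam t s) = (ν.restrict s).map T := by
  ext B hB
  rw [withDensity_apply _ hB, Measure.map_apply hT hB, Measure.restrict_apply (hT hB),
    hd.measure_eq_lintegral ((hT hB).inter hs), ← lintegral_indicator hB]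
  refine lintegral_congr_ae ?_
  filter_upwards [hd.ae_apply_preimage_inter] with t ht
  exact (ht B s).symm

theorem ae_apply_prod_eq_mul {Y W : Type*} [MeasurableSpace Y] [MeasurableSpace W]
    {ν₂ : Measure Y} {S : Y → W} {κ : Measure W} {lam₂ : W → Measure Y}
    {lam₀ : Z × W → Measure (X × Y)} [SFinite ν] [SFinite ν₂] [SigmaFinite μ] [SigmaFinite κ]
    (hd : IsDisintegration ν T μ lam) (hd₂ : IsDisintegration ν₂ S κ lam₂)
    (hd₀ : IsDisintegration (ν.prod ν₂) (Prod.map T S) (μ.prod κ) lam₀)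
    (hT : Measurable T) (hS : Measurable S) {U : Set X} {V : Set Y}
    (hU : MeasurableSet U) (hV : MeasurableSet V) :
    ∀ᵐ p ∂(μ.prod κ), lam₀ p (U ×ˢ V) = lam p.1 U * lam₂ p.2 V := by
  have hU' := hd.aemeasurable_apply hU
  have hV' := hd₂.aemeasurable_apply hV
  refine (withDensity_eq_iff_of_sigmaFinite (hd₀.aemeasurable_apply (hU.prod hV))
    ((hU'.comp_quasiMeasurePreserving Measure.quasiMeasurePreserving_fst).mul
      (hV'.comp_quasiMeasurePreserving Measure.quasiMeasurePreserving_snd))).1 ?_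
  rw [hd₀.withDensity_eq_map_restrict (hT.prodMap hS) (hU.prod hV), ← Measure.prod_restrict,
    ← Measure.map_prod_map _ _ hT hS, ← hd.withDensity_eq_map_restrict hT hU,
    ← hd₂.withDensity_eq_map_restrict hS hV, prod_withDensity₀ hU' hV']
  rfl

end IsDisintegration

theorem disintegration_prod_general
    {X Y Z W : Type*}
    [MetricSpace X] [CompactSpace X] [MeasurableSpace X] [BorelSpace X]
    [MetricSpace Y] [CompactSpace Y] [MeasurableSpace Y] [BorelSpace Y]
    [MeasurableSpace Z]
    [MeasurableSpace W]
    (ν₁ : Measure X) (ν₂ : Measure Y) [IsFiniteMeasure ν₁] [IsFiniteMeasure ν₂]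
    (T : X → Z) (hT : Measurable T) (S : Y → W) (hS : Measurable S)
    (μ : Measure Z) [SigmaFinite μ] (κ : Measure W) [SigmaFinite κ]
    (lam₁ : Z → Measure X) (lam₂ : W → Measure Y)
    (lam₀ : Z × W → Measure (X × Y))
    (hdis₁ : IsDisintegration ν₁ T μ lam₁)
    (hdis₂ : IsDisintegration ν₂ S κ lam₂)
    (hdis₀ : IsDisintegration (ν₁.prod ν₂) (Prod.map T S) (μ.prod κ) lam₀) :
    ∀ᵐ p ∂(μ.prod κ), lam₀ p = (lam₁ p.1).prod (lam₂ p.2) := by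
  refine Measure.eventually_eq_of_forall_eventually_prod_eq hdis₀.ae_isFiniteMeasure
    fun U V hU hV => ?_
  filter_upwards [hdis₁.ae_apply_prod_eq_mul hdis₂ hdis₀ hT hS hU hV,
    Measure.quasiMeasurePreserving_snd.ae hdis₂.ae_isFiniteMeasure] with p hp _
  rw [Measure.prod_prod, hp]

theorem disintegration_prod
    {X Y Z W : Type*}
    [MetricSpace X] [CompactSpace X] [MeasurableSpace X] [BorelSpace X]
    [MetricSpace Y] [CompactSpace Y] [MeasurableSpace Y] [BorelSpace Y]
    [MeasurableSpace Z] [MeasurableSpace.CountablyGenerated Z] [MeasurableSingletonClass Z]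
    [MeasurableSpace W] [MeasurableSpace.CountablyGenerated W] [MeasurableSingletonClass W]
    (ν₁ : Measure X) (ν₂ : Measure Y) [IsFiniteMeasure ν₁] [IsFiniteMeasure ν₂]
    (T : X → Z) (hT : Measurable T) (S : Y → W) (hS : Measurable S)
    (μ : Measure Z) [SigmaFinite μ] (κ : Measure W) [SigmaFinite κ]
    (habs₁ : ν₁.map T ≪ μ) (habs₂ : ν₂.map S ≪ κ)
    (lam₁ : Z → Measure X) (lam₂ : W → Measure Y)
    (lam₀ : Z × W → Measure (X × Y))
    (hdis₁ : IsDisintegration ν₁ T μ lam₁)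
    (hdis₂ : IsDisintegration ν₂ S κ lam₂)
    (hdis₀ : IsDisintegration (ν₁.prod ν₂) (Prod.map T S) (μ.prod κ) lam₀) :
    ∀ᵐ p ∂(μ.prod κ), lam₀ p = (lam₁ p.1).prod (lam₂ p.2) :=
  disintegration_prod_general ν₁ ν₂ T hT S hS μ κ lam₁ lam₂ lam₀ hdis₁ hdis₂ hdis₀
end

section
/- Let E be a nonempty closed proper subset of [0,1] and let f : E → [0,1] be a continuous function with the property that for every measurable set A ⊆ E, λ(A) = 0 if and only if λ(f(A)) = 0, where λ denotes Lebesgue measure and f(A) denotes the image of A under f. Then there exists a continuous function F : [0,1] → [0,1] such that F restricted to E equals f, and for every measurable set A ⊆ [0,1], λ(A) = 0 if and only if λ(F(A)) = 0. -/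
/-!
On every gap `(a, b)` of `E` (padded by two points outside `[0, 1]`) the extension is the
piecewise affine interpolation through the endpoint values `u`, `v` and a value `p ≠ u, v` at
the midpoint, with `|p - u| + |p - v| ≤ |v - u| + (b - a)`. On each half of a gap it is then
affine with nonzero slope, so it satisfies Lusin's conditions (N) and (N⁻¹) there, hence on all
of `[0, 1] \ E` (countably many gaps); on `E` it is `f`. Continuity at a point `x ∈ E`: on a
short gap near `x` the interpolation stays within `|v - u| + (b - a)` of `u`, and on a long
gap ending near `x` it is within `2 (y - a) / (b - a)` of the endpoint value.
-/

open MeasureTheory Set Topology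
open scoped Pointwise

section PreservesNull

variable {α β : Type*} [MeasurableSpace α] [MeasurableSpace β]

/-- Lusin's conditions (N) and (N⁻¹) for `g` on every subset of `s`. -/
def PreservesNullOn (μ : Measure α) (ν : Measure β) (g : α → β) (s : Set α) : Prop :=
  ∀ t ⊆ s, μ t = 0 ↔ ν (g '' t) = 0

variable {μ : Measure α} {ν : Measure β} {g g' : α → β} {s t : Set α}

lemma PreservesNullOn.mono (h : PreservesNullOn μ ν g s) (hts : t ⊆ s) :
    PreservesNullOn μ ν g t :=
  fun B hB ↦ h B (hB.trans hts)

lemma PreservesNullOn.congr (h : PreservesNullOn μ ν g s) (hg : EqOn g' g s) :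
    PreservesNullOn μ ν g' s :=
  fun B hB ↦ by rw [(hg.mono hB).image_eq]; exact h B hB

lemma PreservesNullOn.union (hs : PreservesNullOn μ ν g s) (ht : PreservesNullOn μ ν g t) :
    PreservesNullOn μ ν g (s ∪ t) := by
  intro B hB
  rw [← inter_union_sdiff B s, image_union, measure_union_null_iff, measure_union_null_iff,
    hs _ inter_subset_right, ht _ fun x hx ↦ (hB hx.1).resolve_left hx.2]

lemma PreservesNullOn.of_nhdsWithin [TopologicalSpace α] [SecondCountableTopology α]
    (h : ∀ x ∈ s, ∃ t ∈ 𝓝[s] x, PreservesNullOn μ ν g t) : PreservesNullOn μ ν g s := by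
  choose! t ht hg using h
  obtain ⟨c, hcs, hc, hcover⟩ := TopologicalSpace.countable_cover_nhdsWithin ht
  intro B hB
  have hB_eq : B = ⋃ x ∈ c, B ∩ t x := by
    rw [← inter_iUnion₂, inter_eq_left.2 (hB.trans hcover)]
  rw [hB_eq, image_iUnion₂, measure_biUnion_null_iff hc, measure_biUnion_null_iff hc]
  exact forall₂_congr fun x hx ↦ hg x (hcs hx) _ inter_subset_right

end PreservesNull

lemma preservesNullOn_affine {k : ℝ} (hk : k ≠ 0) (c : ℝ) (s : Set ℝ) :
    PreservesNullOn volume volume (fun x ↦ c + k * x) s := by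
  intro B _
  have himage : (fun x ↦ c + k * x) '' B = (· + c) '' (k • B) := by
    rw [← image_smul, image_image]
    simp only [smul_eq_mul, add_comm]
  rw [himage, image_add_right, measure_preimage_add_right, Measure.addHaar_smul,
    Module.finrank_self, pow_one, mul_eq_zero, ENNReal.ofReal_eq_zero,
    iff_false_intro (not_le.2 (abs_pos.2 hk)), false_or]

/-- Piecewise affine interpolation of the values `u`, `p`, `v` at `a`, `(a + b) / 2`, `b`. -/
noncomputable def tent (a b u p v x : ℝ) : ℝ :=
  if x ≤ (a + b) / 2 then u + 2 * (x - a) / (b - a) * (p - u)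
  else v + 2 * (b - x) / (b - a) * (p - v)

section Tent

variable {a b u p v x : ℝ}

lemma continuous_tent (hab : a < b) : Continuous (tent a b u p v) := by
  refine Continuous.if_le (by fun_prop) (by fun_prop) continuous_id continuous_const ?_
  rintro x rfl
  have : b - a ≠ 0 := (sub_pos.2 hab).ne'
  field_simp
  ring

lemma tent_neg (hab : a < b) : tent (-b) (-a) v p u (-x) = tent a b u p v x := by
  have hba : b - a ≠ 0 := (sub_pos.2 hab).ne'
  unfold tent
  simp only [neg_sub_neg]
  split_ifs with hr hl hl
  · obtain rfl : x = (a + b) / 2 := by linarith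
    rw [show 2 * (b - (a + b) / 2) / (b - a) = 1 by field_simp; ring,
      show 2 * ((a + b) / 2 - a) / (b - a) = 1 by field_simp; ring]
    ring
  · ring
  · ring
  · exact absurd (by linarith) hr

lemma tent_mem_Icc (hab : a < b) (hx : x ∈ Icc a b) (hu : u ∈ Icc (0 : ℝ) 1)
    (hp : p ∈ Icc (0 : ℝ) 1) (hv : v ∈ Icc (0 : ℝ) 1) : tent a b u p v x ∈ Icc (0 : ℝ) 1 := by
  have hba : 0 < b - a := sub_pos.2 hab
  unfold tent
  split_ifs with hm
  · refine (convex_Icc (0 : ℝ) 1).add_smul_sub_mem hu hp (t := 2 * (x - a) / (b - a))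
      ⟨by have := hx.1; positivity, ?_⟩
    rw [div_le_one hba]; linarith
  · refine (convex_Icc (0 : ℝ) 1).add_smul_sub_mem hv hp (t := 2 * (b - x) / (b - a))
      ⟨by have := hx.2; positivity, ?_⟩
    rw [div_le_one hba]; linarith

lemma abs_tent_sub_left_le (hab : a < b) (hx : x ∈ Icc a b) :
    |tent a b u p v x - u| ≤ |p - u| + |p - v| := by
  have hba : 0 < b - a := sub_pos.2 hab
  unfold tent
  split_ifs with hm
  · have ht : 2 * (x - a) / (b - a) ≤ 1 := by rw [div_le_one hba]; linarith
    rw [add_sub_cancel_left, abs_mul, abs_of_nonneg (by have := hx.1; positivity)]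
    nlinarith [abs_nonneg (p - u), abs_nonneg (p - v)]
  · have ht : 2 * (b - x) / (b - a) ≤ 1 := by rw [div_le_one hba]; linarith
    have hs : 0 ≤ 2 * (b - x) / (b - a) := by have := hx.2; positivity
    calc |v + 2 * (b - x) / (b - a) * (p - v) - u|
        = |(p - u) + (1 - 2 * (b - x) / (b - a)) * (v - p)| := by ring_nf
      _ ≤ |p - u| + |p - v| := by
        refine (abs_add_le _ _).trans (add_le_add le_rfl ?_)
        rw [abs_mul, abs_of_nonneg (by linarith), abs_sub_comm]
        nlinarith [abs_nonneg (p - v)]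

lemma abs_tent_sub_left_le_div (hab : a < b) (hx : x ∈ Icc a b) (hu : u ∈ Icc (0 : ℝ) 1)
    (hp : p ∈ Icc (0 : ℝ) 1) (hv : v ∈ Icc (0 : ℝ) 1) :
    |tent a b u p v x - u| ≤ 2 * (x - a) / (b - a) := by
  have hba : 0 < b - a := sub_pos.2 hab
  have ht : 0 ≤ 2 * (x - a) / (b - a) := by have := hx.1; positivity
  by_cases hm : x ≤ (a + b) / 2
  · rw [tent, if_pos hm, add_sub_cancel_left, abs_mul, abs_of_nonneg ht]
    exact mul_le_of_le_one_right ht (Real.dist_eq p u ▸ Real.dist_le_of_mem_Icc_01 hp hu)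
  · calc |tent a b u p v x - u| ≤ 1 :=
          Real.dist_eq _ u ▸ Real.dist_le_of_mem_Icc_01 (tent_mem_Icc hab hx hu hp hv) hu
      _ ≤ 2 * (x - a) / (b - a) := by rw [le_div_iff₀ hba]; linarith

lemma preservesNullOn_tent (hab : a < b) (hpu : p ≠ u) (hpv : p ≠ v) :
    PreservesNullOn volume volume (tent a b u p v) univ := by
  have hba : b - a ≠ 0 := (sub_pos.2 hab).ne'
  have hleft : PreservesNullOn volume volume (tent a b u p v) (Iic ((a + b) / 2)) :=
    (preservesNullOn_affine (k := 2 * (p - u) / (b - a))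
        (div_ne_zero (mul_ne_zero two_ne_zero (sub_ne_zero.2 hpu)) hba)
        (u - 2 * (p - u) / (b - a) * a) _).congr
      fun x hx ↦ by rw [tent, if_pos (mem_Iic.1 hx)]; ring
  have hright : PreservesNullOn volume volume (tent a b u p v) (Ioi ((a + b) / 2)) :=
    (preservesNullOn_affine (k := 2 * (v - p) / (b - a))
        (div_ne_zero (mul_ne_zero two_ne_zero (sub_ne_zero.2 hpv.symm)) hba)
        (v - 2 * (v - p) / (b - a) * b) _).congr
      fun x hx ↦ by rw [tent, if_neg (not_le.2 hx)]; ring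
  rw [← Iic_union_Ioi]
  exact hleft.union hright

end Tent

/-- For `u = v` the average would make the interpolation constant, mapping a whole gap to a
single point. -/
noncomputable def gapPeak (u v d : ℝ) : ℝ :=
  if u = v then (if u ≤ 1 / 2 then u + min d 1 / 2 else u - min d 1 / 2) else (u + v) / 2

section GapPeak

variable {u v d : ℝ}

lemma gapPeak_comm : gapPeak u v d = gapPeak v u d := by
  by_cases huv : u = v
  · rw [huv]
  · simp only [gapPeak, huv, Ne.symm huv, if_false, add_comm]

lemma gapPeak_mem_Icc (hu : u ∈ Icc (0 : ℝ) 1) (hv : v ∈ Icc (0 : ℝ) 1) (hd : 0 ≤ d) :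
    gapPeak u v d ∈ Icc (0 : ℝ) 1 := by
  have h₀ : 0 ≤ min d 1 := le_min hd zero_le_one
  have h₁ : min d 1 ≤ 1 := min_le_right _ _
  unfold gapPeak
  split_ifs <;> constructor <;> linarith [hu.1, hu.2, hv.1, hv.2]

lemma gapPeak_ne_left (hd : 0 < d) : gapPeak u v d ≠ u := by
  have h₀ : 0 < min d 1 := lt_min hd one_pos
  unfold gapPeak
  split_ifs with huv
  · linarith
  · linarith
  · exact fun h ↦ huv (by linarith)

lemma gapPeak_ne_right (hd : 0 < d) : gapPeak u v d ≠ v :=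
  gapPeak_comm (u := u) ▸ gapPeak_ne_left hd

lemma abs_gapPeak_sub_add_le (hd : 0 ≤ d) :
    |gapPeak u v d - u| + |gapPeak u v d - v| ≤ |v - u| + d := by
  have h₀ : 0 ≤ min d 1 := le_min hd zero_le_one
  have h₁ : min d 1 ≤ d := min_le_left _ _
  unfold gapPeak
  split_ifs with huv
  · subst huv; simp only [add_sub_cancel_left, sub_self, abs_zero, zero_add]
    rw [abs_of_nonneg (by linarith)]; linarith
  · subst huv; simp only [sub_sub_cancel_left, sub_self, abs_zero, zero_add, abs_neg]
    rw [abs_of_nonneg (by linarith)]; linarith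
  · rw [show (u + v) / 2 - u = (v - u) / 2 by ring, show (u + v) / 2 - v = -((v - u) / 2) by ring,
      abs_neg, abs_div, abs_two]
    linarith

end GapPeak

noncomputable def gapInterp (a b u v : ℝ) : ℝ → ℝ := tent a b u (gapPeak u v (b - a)) v

section GapInterp

variable {a b u v y : ℝ}

lemma continuous_gapInterp (hab : a < b) : Continuous (gapInterp a b u v) :=
  continuous_tent hab

lemma gapInterp_mem_Icc (hab : a < b) (hy : y ∈ Icc a b) (hu : u ∈ Icc (0 : ℝ) 1)
    (hv : v ∈ Icc (0 : ℝ) 1) : gapInterp a b u v y ∈ Icc (0 : ℝ) 1 :=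
  tent_mem_Icc hab hy hu (gapPeak_mem_Icc hu hv (sub_pos.2 hab).le) hv

lemma preservesNullOn_gapInterp (hab : a < b) :
    PreservesNullOn volume volume (gapInterp a b u v) univ :=
  preservesNullOn_tent hab (gapPeak_ne_left (sub_pos.2 hab)) (gapPeak_ne_right (sub_pos.2 hab))

lemma gapInterp_neg (hab : a < b) : gapInterp (-b) (-a) v u (-y) = gapInterp a b u v y := by
  rw [gapInterp, gapInterp, neg_sub_neg, gapPeak_comm, tent_neg hab]

lemma abs_gapInterp_sub_left_le (hab : a < b) (hy : y ∈ Icc a b) :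
    |gapInterp a b u v y - u| ≤ |v - u| + (b - a) :=
  (abs_tent_sub_left_le hab hy).trans (abs_gapPeak_sub_add_le (sub_pos.2 hab).le)

lemma abs_gapInterp_sub_left_le_div (hab : a < b) (hy : y ∈ Icc a b) (hu : u ∈ Icc (0 : ℝ) 1)
    (hv : v ∈ Icc (0 : ℝ) 1) : |gapInterp a b u v y - u| ≤ 2 * (y - a) / (b - a) :=
  abs_tent_sub_left_le_div hab hy hu (gapPeak_mem_Icc hu hv (sub_pos.2 hab).le) hv

/-- Either the gap is short and both end values are close to `c`, or `y` lies in a small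
initial part of a long gap. -/
lemma abs_gapInterp_sub_lt {x c ε ρ : ℝ} (hxa : x ≤ a) (hy : y ∈ Ioo a b)
    (hyx : y - x < min (ρ / 2) (ρ * ε / 8)) (hu : u ∈ Icc (0 : ℝ) 1) (hv : v ∈ Icc (0 : ℝ) 1)
    (hρ : 0 < ρ) (hρε : ρ ≤ ε / 4) (huc : |u - c| < ε / 4) (hvc : b - x < ρ → |v - c| < ε / 4) :
    |gapInterp a b u v y - c| < ε := by
  have hab : a < b := hy.1.trans hy.2
  have hyab : y ∈ Icc a b := Ioo_subset_Icc_self hy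
  have hyx₁ : y - x < ρ / 2 := hyx.trans_le (min_le_left _ _)
  have hyx₂ : y - x < ρ * ε / 8 := hyx.trans_le (min_le_right _ _)
  have htri : |gapInterp a b u v y - c| ≤ |gapInterp a b u v y - u| + |u - c| :=
    abs_sub_le _ _ _
  rcases lt_or_ge (b - x) ρ with hnear | hfar
  · have hvu : |v - u| ≤ |v - c| + |u - c| := by
      rw [abs_sub_comm u c]; exact abs_sub_le _ _ _
    linarith [abs_gapInterp_sub_left_le (u := u) (v := v) hab hyab, hvc hnear]
  · have hlong : 2 * (y - a) / (b - a) ≤ ε / 2 := by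
      have hba : ρ / 2 ≤ b - a := by linarith [hy.1]
      rw [div_le_iff₀ (sub_pos.2 hab)]
      nlinarith [mul_le_mul_of_nonneg_left hba (by linarith : (0 : ℝ) ≤ ε / 2), hy.1]
    linarith [abs_gapInterp_sub_left_le_div hab hyab hu hv]

end GapInterp

/-- `(a, b)` is a bounded connected component of the complement of `K`. -/
structure IsGap (K : Set ℝ) (a b : ℝ) : Prop where
  left_mem : a ∈ K
  right_mem : b ∈ K
  lt : a < b
  notMem : ∀ z ∈ Ioo a b, z ∉ K

noncomputable def gapLeft (K : Set ℝ) (x : ℝ) : ℝ := sSup (K ∩ Iic x)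

noncomputable def gapRight (K : Set ℝ) (x : ℝ) : ℝ := sInf (K ∩ Ici x)

section Gap

variable {K : Set ℝ} {a b m M x y : ℝ}

lemma isGap_gapLeft_gapRight (hK : IsClosed K) (hm : m ∈ K) (hM : M ∈ K) (hx : x ∈ Icc m M)
    (hxK : x ∉ K) :
    IsGap K (gapLeft K x) (gapRight K x) ∧ x ∈ Ioo (gapLeft K x) (gapRight K x) := by
  have hbdd₁ : BddAbove (K ∩ Iic x) := ⟨x, fun z hz ↦ hz.2⟩
  have hbdd₂ : BddBelow (K ∩ Ici x) := ⟨x, fun z hz ↦ hz.2⟩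
  have hl : gapLeft K x ∈ K ∩ Iic x :=
    (hK.inter isClosed_Iic).csSup_mem ⟨m, hm, hx.1⟩ hbdd₁
  have hr : gapRight K x ∈ K ∩ Ici x :=
    (hK.inter isClosed_Ici).csInf_mem ⟨M, hM, hx.2⟩ hbdd₂
  have hlx : gapLeft K x < x := hl.2.lt_of_ne fun h ↦ hxK (h ▸ hl.1)
  have hxr : x < gapRight K x := hr.2.lt_of_ne' fun h ↦ hxK (h ▸ hr.1)
  refine ⟨⟨hl.1, hr.1, hlx.trans hxr, fun z hz hzK ↦ ?_⟩, hlx, hxr⟩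
  rcases le_or_gt z x with hzx | hxz
  · exact (le_csSup hbdd₁ ⟨hzK, hzx⟩).not_gt hz.1
  · exact (csInf_le hbdd₂ ⟨hzK, hxz.le⟩).not_gt hz.2

lemma exists_isGap (hK : IsClosed K) (hm : m ∈ K) (hM : M ∈ K) (hx : x ∈ Icc m M \ K) :
    ∃ a b, IsGap K a b ∧ x ∈ Ioo a b :=
  ⟨_, _, isGap_gapLeft_gapRight hK hm hM hx.1 hx.2⟩

lemma IsGap.gapLeft_eq (h : IsGap K a b) (hy : y ∈ Ioo a b) : gapLeft K y = a :=
  IsGreatest.csSup_eq ⟨⟨h.left_mem, hy.1.le⟩, fun z hz ↦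
    not_lt.1 fun haz ↦ h.notMem z ⟨haz, hz.2.trans_lt hy.2⟩ hz.1⟩

lemma IsGap.gapRight_eq (h : IsGap K a b) (hy : y ∈ Ioo a b) : gapRight K y = b :=
  IsLeast.csInf_eq ⟨⟨h.right_mem, hy.2.le⟩, fun z hz ↦
    not_lt.1 fun hzb ↦ h.notMem z ⟨hy.1.trans_le hz.2, hzb⟩ hz.1⟩

end Gap

open Classical in
noncomputable def gapExtension (K : Set ℝ) (g : ℝ → ℝ) (x : ℝ) : ℝ :=
  if x ∈ K then g x
  else gapInterp (gapLeft K x) (gapRight K x) (g (gapLeft K x)) (g (gapRight K x)) x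

section GapExtension

variable {K : Set ℝ} {g : ℝ → ℝ} {a b m M x : ℝ}

lemma gapExtension_eqOn : EqOn (gapExtension K g) g K :=
  fun _ hx ↦ if_pos hx

lemma IsGap.eqOn_gapExtension (h : IsGap K a b) :
    EqOn (gapExtension K g) (gapInterp a b (g a) (g b)) (Ioo a b) := by
  intro y hy
  rw [gapExtension, if_neg (h.notMem y hy), h.gapLeft_eq hy, h.gapRight_eq hy]

variable (hK : IsClosed K) (hm : m ∈ K) (hM : M ∈ K)
include hK hm hM

lemma continuousAt_gapExtension_of_notMem (hx : x ∈ Icc m M \ K) :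
    ContinuousAt (gapExtension K g) x := by
  obtain ⟨a, b, hab, hxab⟩ := exists_isGap hK hm hM hx
  exact (continuous_gapInterp hab.lt).continuousAt.congr
    (hab.eqOn_gapExtension.eventuallyEq_of_mem (Ioo_mem_nhds hxab.1 hxab.2)).symm

lemma preservesNullOn_gapExtension :
    PreservesNullOn volume volume (gapExtension K g) (Icc m M \ K) := by
  refine PreservesNullOn.of_nhdsWithin fun x hx ↦ ?_
  obtain ⟨a, b, hab, hxab⟩ := exists_isGap hK hm hM hx
  exact ⟨Ioo a b, mem_nhdsWithin_of_mem_nhds (Ioo_mem_nhds hxab.1 hxab.2),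
    ((preservesNullOn_gapInterp hab.lt).mono (subset_univ _)).congr hab.eqOn_gapExtension⟩

variable (hgK : MapsTo g K (Icc 0 1))
include hgK

lemma mapsTo_gapExtension : MapsTo (gapExtension K g) (Icc m M) (Icc 0 1) := by
  intro x hx
  by_cases hxK : x ∈ K
  · rw [gapExtension_eqOn hxK]; exact hgK hxK
  · obtain ⟨a, b, hab, hxab⟩ := exists_isGap hK hm hM ⟨hx, hxK⟩
    rw [hab.eqOn_gapExtension hxab]
    exact gapInterp_mem_Icc hab.lt (Ioo_subset_Icc_self hxab) (hgK hab.left_mem)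
      (hgK hab.right_mem)

lemma continuousWithinAt_gapExtension_of_mem (hg : ContinuousOn g K) (hx : x ∈ K) :
    ContinuousWithinAt (gapExtension K g) (Icc m M) x := by
  rw [Metric.continuousWithinAt_iff]
  intro ε hε
  obtain ⟨δ, hδ, hgx⟩ := Metric.continuousWithinAt_iff.1 (hg x hx) (ε / 4) (by positivity)
  set ρ := min δ (ε / 4)
  have hρ : 0 < ρ := lt_min hδ (by positivity)
  have hgρ : ∀ z ∈ K, |z - x| < ρ → |g z - g x| < ε / 4 := fun z hz hzx ↦
    hgx hz (hzx.trans_le (min_le_left _ _))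
  refine ⟨min (ρ / 2) (ρ * ε / 8), by positivity, fun y hy hyx ↦ ?_⟩
  rw [Real.dist_eq] at hyx ⊢
  have hρ₂ : min (ρ / 2) (ρ * ε / 8) ≤ ρ / 2 := min_le_left _ _
  obtain ⟨hyx₁, hyx₂⟩ := abs_sub_lt_iff.1 hyx
  rw [gapExtension_eqOn hx]
  by_cases hyK : y ∈ K
  · rw [gapExtension_eqOn hyK]
    linarith [hgρ y hyK (abs_sub_lt_iff.2 ⟨by linarith, by linarith⟩)]
  obtain ⟨a, b, hab, hyab⟩ := exists_isGap hK hm hM ⟨hy, hyK⟩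
  have hya := hyab.1
  have hyb := hyab.2
  rw [hab.eqOn_gapExtension hyab]
  rcases le_or_gt x a with hxa | hax
  · exact abs_gapInterp_sub_lt hxa hyab hyx₁ (hgK hab.left_mem) (hgK hab.right_mem) hρ
      (min_le_right _ _) (hgρ a hab.left_mem (abs_sub_lt_iff.2 ⟨by linarith, by linarith⟩))
      fun hbx ↦ hgρ b hab.right_mem (abs_sub_lt_iff.2 ⟨hbx, by linarith⟩)
  · have hbx : b ≤ x := not_lt.1 fun hxb ↦ hab.notMem x ⟨hax, hxb⟩ hx
    rw [← gapInterp_neg hab.lt]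
    exact abs_gapInterp_sub_lt (neg_le_neg hbx) ⟨neg_lt_neg hyb, neg_lt_neg hya⟩
      (by linarith) (hgK hab.right_mem) (hgK hab.left_mem) hρ (min_le_right _ _)
      (hgρ b hab.right_mem (abs_sub_lt_iff.2 ⟨by linarith, by linarith⟩))
      fun hax' ↦ hgρ a hab.left_mem (abs_sub_lt_iff.2 ⟨by linarith, by linarith⟩)

lemma continuousOn_gapExtension (hg : ContinuousOn g K) :
    ContinuousOn (gapExtension K g) (Icc m M) := by
  intro x hx
  by_cases hxK : x ∈ K
  · exact continuousWithinAt_gapExtension_of_mem hK hm hM hgK hg hxK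
  · exact (continuousAt_gapExtension_of_notMem hK hm hM ⟨hx, hxK⟩).continuousWithinAt

end GapExtension

lemma exists_extension_to_padding {E : Set ℝ} (hE : IsClosed E) (hE_sub : E ⊆ Icc 0 1)
    {f : ℝ → ℝ} (hf : ContinuousOn f E) (hf_maps : MapsTo f E (Icc 0 1)) :
    ∃ g : ℝ → ℝ, ContinuousOn g ({-1, 2} ∪ E) ∧ MapsTo g ({-1, 2} ∪ E) (Icc 0 1) ∧ EqOn g f E := by
  classical
  set g : ℝ → ℝ := E.piecewise f fun _ ↦ 1 / 2
  have hgf : EqOn g f E := fun x hx ↦ E.piecewise_eq_of_mem _ _ hx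
  have hg_pad : EqOn g (fun _ ↦ 1 / 2) {-1, 2} := by
    refine fun z hz ↦ E.piecewise_eq_of_notMem _ _ fun hzE ↦ ?_
    rcases hz with rfl | rfl <;> linarith [(hE_sub hzE).1, (hE_sub hzE).2]
  refine ⟨g, (continuousOn_const.congr hg_pad).union_of_isClosed (hf.congr hgf)
    (toFinite _).isClosed hE, ?_, hgf⟩
  rintro z (hz | hz)
  · rw [hg_pad hz]; norm_num
  · rw [hgf hz]; exact hf_maps hz

theorem extension_preserving_null_condition_general
    (E : Set ℝ) (hE_closed : IsClosed E)
    (hE_sub : E ⊆ Icc (0:ℝ) 1)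
    (f : ℝ → ℝ) (hf_cont : ContinuousOn f E) (hf_maps : MapsTo f E (Icc (0:ℝ) 1))
    (hf_null : ∀ A ⊆ E, MeasurableSet A → (volume A = 0 ↔ volume (f '' A) = 0)) :
    ∃ F : ℝ → ℝ, ContinuousOn F (Icc (0:ℝ) 1) ∧ MapsTo F (Icc (0:ℝ) 1) (Icc (0:ℝ) 1) ∧
      EqOn F f E ∧
      ∀ A ⊆ Icc (0:ℝ) 1, MeasurableSet A → (volume A = 0 ↔ volume (F '' A) = 0) := by
  obtain ⟨g, hg, hgK, hgf⟩ := exists_extension_to_padding hE_closed hE_sub hf_cont hf_maps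
  set K : Set ℝ := {-1, 2} ∪ E
  have hK : IsClosed K := (toFinite _).isClosed.union hE_closed
  have hm : (-1 : ℝ) ∈ K := by simp [K]
  have hM : (2 : ℝ) ∈ K := by simp [K]
  have hsub : Icc (0 : ℝ) 1 ⊆ Icc (-1) 2 := Icc_subset_Icc (by norm_num) (by norm_num)
  have hFf : EqOn (gapExtension K g) f E := (gapExtension_eqOn.mono subset_union_right).trans hgf
  refine ⟨gapExtension K g, (continuousOn_gapExtension hK hm hM hgK hg).mono hsub,
    (mapsTo_gapExtension hK hm hM hgK).mono_left hsub, hFf, fun A hA hAm ↦ ?_⟩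
  have hgap : A \ E ⊆ Icc (-1) 2 \ K := by
    rintro x ⟨hxA, hxE⟩
    have hx := hA hxA
    refine ⟨hsub hx, ?_⟩
    rintro ((rfl | rfl) | hxE') <;> first | exact hxE hxE' | norm_num at hx
  rw [← inter_union_sdiff A E, image_union, measure_union_null_iff, measure_union_null_iff,
    hf_null _ inter_subset_right (hAm.inter hE_closed.measurableSet),
    preservesNullOn_gapExtension hK hm hM _ hgap, (hFf.mono inter_subset_right).image_eq]

/-- Tietze-type extension preserving the Lusin null-set condition in both directions. -/
theorem extension_preserving_null_condition
    (E : Set ℝ) (hE_ne : E.Nonempty) (hE_closed : IsClosed E)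
    (hE_sub : E ⊆ Icc (0:ℝ) 1) (hE_proper : E ≠ Icc (0:ℝ) 1)
    (f : ℝ → ℝ) (hf_cont : ContinuousOn f E) (hf_maps : MapsTo f E (Icc (0:ℝ) 1))
    (hf_null : ∀ A ⊆ E, MeasurableSet A → (volume A = 0 ↔ volume (f '' A) = 0)) :
    ∃ F : ℝ → ℝ, ContinuousOn F (Icc (0:ℝ) 1) ∧ MapsTo F (Icc (0:ℝ) 1) (Icc (0:ℝ) 1) ∧
      EqOn F f E ∧
      ∀ A ⊆ Icc (0:ℝ) 1, MeasurableSet A → (volume A = 0 ↔ volume (F '' A) = 0) :=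
  extension_preserving_null_condition_general E hE_closed hE_sub f hf_cont hf_maps hf_null
end

section
/- Let F : [0,1] → [0,1] be a Lebesgue-measurable function such that for every measurable set A ⊆ [0,1], λ(A) = 0 if and only if λ(F(A)) = 0, where λ is Lebesgue measure. Then there exists a measurable set E ⊆ [0,1] with λ(E) > 0 such that F is injective on E. -/
open MeasureTheory Set

/-- Lusin-type lemma: a measurable `F` mapping `[0,1]` into `[0,1]` is continuous on a
compact subset of `[0,1]` of positive measure. -/
lemma exists_compact_continuousOn_aux
    (F : ℝ → ℝ) (hF_meas : Measurable F)
    (hF_maps : MapsTo F (Icc (0:ℝ) 1) (Icc (0:ℝ) 1)) :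
    ∃ K, K ⊆ Icc (0:ℝ) 1 ∧ IsCompact K ∧ ContinuousOn F K ∧ volume K ≠ 0 := by
  classical
  -- dyadic pieces
  set c : ℕ → ℝ := fun n => ((2:ℝ) ^ n)⁻¹ with hc
  set A : ℕ → ℕ → Set ℝ := fun n k =>
    Icc (0:ℝ) 1 ∩ F ⁻¹' Icc ((k : ℝ) * c n) (((k : ℝ) + 1) * c n) with hA
  have hAmeas : ∀ n k, MeasurableSet (A n k) := fun n k =>
    measurableSet_Icc.inter (hF_meas measurableSet_Icc)
  have hAfin : ∀ n k, volume (A n k) ≠ ⊤ := by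
    intro n k
    refine ne_top_of_le_ne_top ?_ (measure_mono (inter_subset_left ..))
    simp [Real.volume_Icc]
  -- choose compact subsets
  have hchoice : ∀ n k : ℕ, ∃ Knk, Knk ⊆ A n k ∧ IsCompact Knk ∧
      volume (A n k \ Knk) < (2⁻¹ : ENNReal) ^ (n + 3) * 2⁻¹ ^ k := by
    intro n k
    exact (hAmeas n k).exists_isCompact_diff_lt (hAfin n k)
      (mul_ne_zero (pow_ne_zero _ (by norm_num)) (pow_ne_zero _ (by norm_num)))
  choose Kc hKcA hKcC hKcV using hchoice
  set Kn : ℕ → Set ℝ := fun n => ⋃ k ∈ Finset.range (2 ^ n + 1), Kc n k with hKn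
  have hKnC : ∀ n, IsCompact (Kn n) := fun n =>
    (Finset.range (2 ^ n + 1)).isCompact_biUnion (fun k _ => hKcC n k)
  set K : Set ℝ := ⋂ n, Kn n with hK
  have hKsub : K ⊆ Icc (0:ℝ) 1 := by
    refine (iInter_subset _ 0).trans ?_
    refine iUnion₂_subset fun k _ => (hKcA 0 k).trans (inter_subset_left ..)
  have hKC : IsCompact K :=
    (hKnC 0).of_isClosed_subset (isClosed_iInter fun n => (hKnC n).isClosed)
      (iInter_subset _ 0)
  -- covering property
  have hcover : ∀ x ∈ Icc (0:ℝ) 1, ∀ n : ℕ, ∃ k ≤ 2 ^ n, x ∈ A n k := by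
    intro x hx n
    have hFx := hF_maps hx
    refine ⟨⌊F x * 2 ^ n⌋₊, ?_, hx, ?_, ?_⟩
    · calc ⌊F x * 2 ^ n⌋₊ ≤ ⌊(1:ℝ) * 2 ^ n⌋₊ := by
            refine Nat.floor_le_floor ?_
            have hp : (0:ℝ) < 2 ^ n := by positivity
            nlinarith [hFx.2, hFx.1]
        _ = 2 ^ n := by
            rw [one_mul]
            rw [show ((2:ℝ) ^ n) = ((2 ^ n : ℕ) : ℝ) by push_cast; ring]
            exact Nat.floor_natCast _
    · have h1 : (⌊F x * 2 ^ n⌋₊ : ℝ) ≤ F x * 2 ^ n :=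
        Nat.floor_le (mul_nonneg hFx.1 (by positivity))
      show (⌊F x * 2 ^ n⌋₊ : ℝ) * ((2:ℝ)^n)⁻¹ ≤ F x
      have hp : (0:ℝ) < 2 ^ n := by positivity
      calc (⌊F x * 2 ^ n⌋₊ : ℝ) * ((2:ℝ)^n)⁻¹ ≤ (F x * 2 ^ n) * ((2:ℝ)^n)⁻¹ := by
            gcongr
        _ = F x := by field_simp
    · show F x ≤ ((⌊F x * 2 ^ n⌋₊ : ℝ) + 1) * ((2:ℝ)^n)⁻¹
      have hp : (0:ℝ) < 2 ^ n := by positivity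
      calc F x = (F x * 2 ^ n) / 2 ^ n := by field_simp
        _ ≤ ((⌊F x * 2 ^ n⌋₊ : ℝ) + 1) / 2 ^ n := by
            gcongr
            exact le_of_lt (Nat.lt_floor_add_one _)
        _ = ((⌊F x * 2 ^ n⌋₊ : ℝ) + 1) * ((2:ℝ)^n)⁻¹ := by ring
  -- oscillation bound on pieces
  have hosc : ∀ n k, ∀ x ∈ A n k, ∀ y ∈ A n k, dist (F x) (F y) ≤ c n := by
    intro n k x hx y hy
    have := Real.dist_le_of_mem_Icc hx.2 hy.2
    calc dist (F x) (F y) ≤ ((k : ℝ) + 1) * c n - (k : ℝ) * c n := this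
      _ = c n := by ring
  -- continuity on K
  have hcont : ContinuousOn F K := by
    intro x hxK
    rw [Metric.continuousWithinAt_iff]
    intro ε hε
    obtain ⟨n, hn⟩ : ∃ n : ℕ, c n < ε := by
      obtain ⟨n, hn⟩ := exists_pow_lt_of_lt_one hε (by norm_num : (2:ℝ)⁻¹ < 1)
      refine ⟨n, ?_⟩
      show ((2:ℝ)^n)⁻¹ < ε
      rwa [← inv_pow]
    -- the finitely many pieces at level n not containing x form a closed set avoiding x
    set C : Set ℝ := ⋃ k ∈ (Finset.range (2 ^ n + 1)).filter (fun k => x ∉ Kc n k), Kc n k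
      with hC
    have hCclosed : IsClosed C :=
      (((Finset.range (2 ^ n + 1)).filter _).isCompact_biUnion
        (fun k _ => hKcC n k)).isClosed
    have hxC : x ∉ C := by
      intro hxC
      rw [hC, mem_iUnion₂] at hxC
      obtain ⟨k, hk, hxk⟩ := hxC
      exact (Finset.mem_filter.1 hk).2 hxk
    obtain ⟨δ, hδ, hball⟩ := Metric.isOpen_iff.1 hCclosed.isOpen_compl x hxC
    refine ⟨δ, hδ, ?_⟩
    intro y hyK hyx
    -- y lies in some piece at level n; x is in the same piece
    have hyKn : y ∈ Kn n := mem_iInter.1 hyK n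
    rw [hKn, mem_iUnion₂] at hyKn
    obtain ⟨k, hkmem, hyk⟩ := hyKn
    have hxk : x ∈ Kc n k := by
      by_contra hxk
      have : y ∈ C := by
        rw [hC]
        exact mem_iUnion₂.2 ⟨k, Finset.mem_filter.2 ⟨hkmem, hxk⟩, hyk⟩
      exact (hball hyx) this
    calc dist (F y) (F x) ≤ c n := hosc n k y (hKcA n k hyk) x (hKcA n k hxk)
      _ < ε := hn
  -- measure bound
  have hdiff : Icc (0:ℝ) 1 \ K ⊆ ⋃ p : ℕ × ℕ, (A p.1 p.2 \ Kc p.1 p.2) := by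
    intro x hx
    obtain ⟨hx1, hx2⟩ := hx
    rw [hK, mem_iInter, not_forall] at hx2
    obtain ⟨n, hxn⟩ := hx2
    obtain ⟨k, hk, hxA⟩ := hcover x hx1 n
    refine mem_iUnion.2 ⟨⟨n, k⟩, hxA, fun hxk => hxn ?_⟩
    exact mem_iUnion₂.2 ⟨k, Finset.mem_range.2 (Nat.lt_succ_of_le hk), hxk⟩
  have hvol : volume (Icc (0:ℝ) 1 \ K) ≤ 2⁻¹ := by
    refine (measure_mono hdiff).trans ?_
    refine (measure_iUnion_le _).trans ?_
    have hsum : ∀ p : ℕ × ℕ, volume (A p.1 p.2 \ Kc p.1 p.2) ≤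
        (2⁻¹ : ENNReal) ^ (p.1 + 3) * 2⁻¹ ^ p.2 := fun p => (hKcV p.1 p.2).le
    refine (ENNReal.tsum_le_tsum hsum).trans ?_
    rw [ENNReal.tsum_prod']
    have h1 : ∀ n : ℕ, (∑' k : ℕ, (2⁻¹ : ENNReal) ^ (n + 3) * 2⁻¹ ^ k)
        = 2⁻¹ ^ (n + 2) := by
      intro n
      rw [ENNReal.tsum_mul_left, ENNReal.tsum_geometric, ENNReal.one_sub_inv_two,
        inv_inv, pow_succ, mul_assoc,
        ENNReal.inv_mul_cancel (by norm_num) (by norm_num), mul_one]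
    calc (∑' (n : ℕ) (k : ℕ), (2⁻¹ : ENNReal) ^ (n + 3) * 2⁻¹ ^ k)
        = ∑' n : ℕ, (2⁻¹ : ENNReal) ^ (n + 2) := tsum_congr h1
      _
        = ∑' n : ℕ, (2⁻¹ : ENNReal) ^ 2 * 2⁻¹ ^ n := by
          congr 1; funext n; rw [← pow_add]; ring_nf
      _ = 2⁻¹ ^ 2 * 2 := by rw [ENNReal.tsum_mul_left, ENNReal.tsum_geometric,
          ENNReal.one_sub_inv_two, inv_inv]
      _ ≤ 2⁻¹ := by
          rw [pow_two, mul_assoc, ENNReal.inv_mul_cancel (by norm_num) (by norm_num), mul_one]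
  have hKvol : volume K ≠ 0 := by
    intro h0
    have h1 : volume (Icc (0:ℝ) 1) ≤ volume (Icc (0:ℝ) 1 ∩ K) + volume (Icc (0:ℝ) 1 \ K) :=
      measure_le_inter_add_diff _ _ _
    rw [Real.volume_Icc] at h1
    have h2 : volume (Icc (0:ℝ) 1 ∩ K) = 0 :=
      measure_mono_null (inter_subset_right ..) h0
    rw [h2, zero_add] at h1
    simp at h1
    exact absurd (h1.trans hvol) (by norm_num)
  exact ⟨K, hKsub, hKC, hcont, hKvol⟩

/-- A measurable function `F : [0,1] → [0,1]` preserving null sets in both directions is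
injective on a set of positive Lebesgue measure. -/
theorem exists_posMeasure_injOn
    (F : ℝ → ℝ) (hF_meas : Measurable F)
    (hF_maps : MapsTo F (Icc (0:ℝ) 1) (Icc (0:ℝ) 1))
    (hF_null : ∀ A ⊆ Icc (0:ℝ) 1, MeasurableSet A → (volume A = 0 ↔ volume (F '' A) = 0)) :
    ∃ E ⊆ Icc (0:ℝ) 1, MeasurableSet E ∧ 0 < volume E ∧ InjOn F E := by
  obtain ⟨K, hKsub, hKC, hcont, hKvol⟩ := exists_compact_continuousOn_aux F hF_meas hF_maps
  -- E = points of K which are minimal in their fiber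
  set E : Set ℝ := K \ ⋃ q : ℚ, (Ioi (q:ℝ) ∩ F ⁻¹' (F '' (K ∩ Iic (q:ℝ)))) with hE
  have hEsub : E ⊆ Icc (0:ℝ) 1 := (diff_subset ..).trans hKsub
  have hEmeas : MeasurableSet E := by
    refine hKC.isClosed.measurableSet.diff (MeasurableSet.iUnion fun q => ?_)
    refine measurableSet_Ioi.inter (hF_meas ?_)
    have : IsCompact (F '' (K ∩ Iic (q:ℝ))) :=
      (hKC.inter_right isClosed_Iic).image_of_continuousOn
        (hcont.mono (inter_subset_left ..))
    exact this.isClosed.measurableSet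
  -- injectivity
  have hinj : InjOn F E := by
    intro x hx y hy hxy
    rcases lt_trichotomy x y with h | h | h
    · exfalso
      obtain ⟨q, hq1, hq2⟩ := exists_rat_btwn h
      exact hy.2 (mem_iUnion.2 ⟨q, hq2, ⟨x, ⟨hx.1, le_of_lt hq1⟩, hxy⟩⟩)
    · exact h
    · exfalso
      obtain ⟨q, hq1, hq2⟩ := exists_rat_btwn h
      exact hx.2 (mem_iUnion.2 ⟨q, hq2, ⟨y, ⟨hy.1, le_of_lt hq1⟩, hxy.symm⟩⟩)
  -- every value of F on K is attained on E
  have himage : F '' K ⊆ F '' E := by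
    rintro _ ⟨x, hxK, rfl⟩
    set S : Set ℝ := K ∩ F ⁻¹' {F x} with hS
    have hSclosed : IsClosed S := hcont.preimage_isClosed_of_isClosed hKC.isClosed
      isClosed_singleton
    have hSC : IsCompact S := hKC.of_isClosed_subset hSclosed (inter_subset_left ..)
    have hSne : S.Nonempty := ⟨x, hxK, rfl⟩
    have hm : sInf S ∈ S := hSC.sInf_mem hSne
    refine ⟨sInf S, ⟨hm.1, ?_⟩, hm.2⟩
    intro hmem
    rw [mem_iUnion] at hmem
    obtain ⟨q, hq1, hq2⟩ := hmem
    obtain ⟨z, hz1, hz2⟩ := hq2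
    have hzS : z ∈ S := ⟨hz1.1, by rw [mem_preimage, hz2]; exact hm.2⟩
    have : sInf S ≤ z := csInf_le hSC.bddBelow hzS
    exact absurd (this.trans hz1.2) (not_le.2 hq1)
  -- positivity
  have hEvol : 0 < volume E := by
    rcases eq_zero_or_pos (volume E) with h0 | h
    · exfalso
      have h1 : volume (F '' E) = 0 := (hF_null E hEsub hEmeas).1 h0
      have h2 : volume (F '' K) = 0 := measure_mono_null himage h1
      exact hKvol ((hF_null K hKsub hKC.isClosed.measurableSet).2 h2)
    · exact h
  exact ⟨E, hEsub, hEmeas, hEvol, hinj⟩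
end

section
/- Let F : [0,1] → [0,1] be a Lebesgue-measurable function such that for every measurable set A ⊆ [0,1], λ(A) = 0 if and only if λ(F(A)) = 0, where λ is Lebesgue measure. Then for every measurable set Y₀ ⊆ [0,1] with λ(Y₀) > 0 there exists a measurable set Y₁ ⊆ Y₀ with λ(Y₁) > 0 such that F is injective on Y₁. -/
/-!
By Lusin's theorem `Y₀` contains a compact set `K` of positive measure on which `F` is continuous.
On `K` keep only the least point of each fibre of `F`: the resulting set `S` is Borel (its
complement in `K` is a countable union of relatively closed sets, indexed by rationals), `F` is
injective on `S`, and `F '' S = F '' K`. The image `F '' K` is not null because `K` is not, so `S`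
is not null either.
-/

open MeasureTheory Set TopologicalSpace
open scoped ENNReal

section Lusin

variable {X β : Type*} [TopologicalSpace X] [MeasurableSpace X] [OpensMeasurableSpace X]
  {μ : Measure X} [μ.WeaklyRegular] {s A : Set X}

theorem MeasurableSet.exists_isClosed_subset_inter_subset_sdiff_measure_lt
    (hs : MeasurableSet s) (hA : MeasurableSet A) (hμs : μ s ≠ ∞) {δ : ℝ≥0∞} (hδ : δ ≠ 0) :
    ∃ C D, IsClosed C ∧ IsClosed D ∧ C ⊆ s ∩ A ∧ D ⊆ s \ A ∧ μ (s \ (C ∪ D)) < δ := by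
  have hδ2 : δ / 2 ≠ 0 := (ENNReal.half_pos hδ).ne'
  obtain ⟨C, hCA, hC, hμC⟩ := (hs.inter hA).exists_isClosed_sdiff_lt
    (measure_ne_top_of_subset inter_subset_left hμs) hδ2
  obtain ⟨D, hDA, hD, hμD⟩ := (hs.diff hA).exists_isClosed_sdiff_lt
    (measure_ne_top_of_subset sdiff_subset hμs) hδ2
  refine ⟨C, D, hC, hD, hCA, hDA, ?_⟩
  have hsplit : s \ (C ∪ D) ⊆ (s ∩ A) \ C ∪ (s \ A) \ D := by
    intro x ⟨hxs, hxCD⟩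
    by_cases hxA : x ∈ A
    exacts [.inl ⟨⟨hxs, hxA⟩, fun h ↦ hxCD (.inl h)⟩, .inr ⟨⟨hxs, hxA⟩, fun h ↦ hxCD (.inr h)⟩]
  calc μ (s \ (C ∪ D)) ≤ μ ((s ∩ A) \ C) + μ ((s \ A) \ D) :=
        (measure_mono hsplit).trans (measure_union_le _ _)
    _ < δ / 2 + δ / 2 := ENNReal.add_lt_add hμC hμD
    _ = δ := ENNReal.add_halves δ

variable [TopologicalSpace β] [SecondCountableTopology β] [MeasurableSpace β]
  [OpensMeasurableSpace β]

theorem Measurable.exists_isClosed_subset_measure_sdiff_lt_continuousOn {f : X → β}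
    (hf : Measurable f) (hs : MeasurableSet s) (hμs : μ s ≠ ∞) {ε : ℝ≥0∞} (hε : ε ≠ 0) :
    ∃ K ⊆ s, IsClosed K ∧ μ (s \ K) < ε ∧ ContinuousOn f K := by
  have hε2 : ε / 2 ≠ 0 := (ENNReal.half_pos hε).ne'
  obtain ⟨K₀, hK₀s, hK₀, hμK₀⟩ := hs.exists_isClosed_sdiff_lt hμs hε2
  have : Countable (countableBasis β) := (countable_countableBasis β).to_subtype
  obtain ⟨δ, hδ, hδsum⟩ := ENNReal.exists_pos_sum_of_countable' hε2 (countableBasis β)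
  choose C D hC hD hCs hDs hμCD using fun U : countableBasis β ↦
    hs.exists_isClosed_subset_inter_subset_sdiff_measure_lt
      (hf (isOpen_of_mem_countableBasis U.2).measurableSet) hμs (hδ U).ne'
  refine ⟨K₀ ∩ ⋂ U, (C U ∪ D U), inter_subset_left.trans hK₀s,
    hK₀.inter (isClosed_iInter fun U ↦ (hC U).union (hD U)), ?_, ?_⟩
  · have hsplit : s \ (K₀ ∩ ⋂ U, (C U ∪ D U)) ⊆ s \ K₀ ∪ ⋃ U, s \ (C U ∪ D U) := by
      rw [sdiff_inter, sdiff_iInter]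
    calc μ (s \ (K₀ ∩ ⋂ U, (C U ∪ D U))) ≤ μ (s \ K₀) + μ (⋃ U, s \ (C U ∪ D U)) :=
          (measure_mono hsplit).trans (measure_union_le _ _)
      _ ≤ μ (s \ K₀) + ∑' U, δ U :=
          add_le_add le_rfl <|
            (measure_iUnion_le _).trans (ENNReal.tsum_le_tsum fun U ↦ (hμCD U).le)
      _ < ε / 2 + ε / 2 := ENNReal.add_lt_add hμK₀ hδsum
      _ = ε := ENNReal.add_halves ε
  · -- On `K`, the preimage of a basic open set `U` is cut out by the open set `(D U)ᶜ`.
    refine (isBasis_countableBasis β).continuousOn_iff.2 fun U hU ↦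
      ⟨(D ⟨U, hU⟩)ᶜ, (hD _).isOpen_compl, ?_⟩
    ext x
    simp only [mem_inter_iff, mem_preimage, mem_compl_iff, mem_iInter]
    refine ⟨fun ⟨hfx, hxK⟩ ↦ ⟨fun hxD ↦ (hDs _ hxD).2 hfx, hxK⟩, fun ⟨hxD, hxK⟩ ↦ ⟨?_, hxK⟩⟩
    exact ((hxK.2 ⟨U, hU⟩).resolve_right hxD |> hCs _).2

end Lusin

section LeastInFiber

variable {β : Type*} (f : ℝ → β) (K : Set ℝ)

def leastInFiber : Set ℝ := {x ∈ K | ∀ y ∈ K, f y = f x → x ≤ y}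

variable {f K}

theorem leastInFiber_subset : leastInFiber f K ⊆ K := fun _ hx ↦ hx.1

theorem injOn_leastInFiber : InjOn f (leastInFiber f K) :=
  fun x hx y hy hxy ↦ le_antisymm (hx.2 y hy.1 hxy.symm) (hy.2 x hx.1 hxy)

theorem leastInFiber_eq :
    leastInFiber f K = K ∩ ⋂ q : ℚ, (Ioi (q : ℝ) ∩ f ⁻¹' (f '' (K ∩ Iic (q : ℝ))))ᶜ := by
  ext x
  simp only [leastInFiber, mem_ofPred_eq, mem_inter_iff, mem_iInter, mem_compl_iff, mem_Ioi,
    mem_preimage, mem_image, mem_Iic, and_congr_right_iff]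
  refine fun _ ↦ ⟨fun hx q ⟨hqx, y, ⟨hyK, hyq⟩, hy⟩ ↦ (hx y hyK hy).not_gt (hyq.trans_lt hqx),
    fun hx y hyK hy ↦ not_lt.1 fun hyx ↦ ?_⟩
  obtain ⟨q, hyq, hqx⟩ := exists_rat_btwn hyx
  exact hx q ⟨hqx, y, ⟨hyK, hyq.le⟩, hy⟩

variable [TopologicalSpace β] [T2Space β]

theorem image_leastInFiber (hK : IsCompact K) (hf : ContinuousOn f K) :
    f '' leastInFiber f K = f '' K := by
  refine (image_mono leastInFiber_subset).antisymm ?_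
  rintro _ ⟨x, hxK, rfl⟩
  have hfibre : IsCompact (K ∩ f ⁻¹' {f x}) :=
    hK.of_isClosed_subset (hf.preimage_isClosed_of_isClosed hK.isClosed isClosed_singleton)
      inter_subset_left
  obtain ⟨m, ⟨hmK, hmx⟩, hmin⟩ := hfibre.exists_isLeast ⟨x, hxK, rfl⟩
  exact ⟨m, ⟨hmK, fun y hyK hy ↦ hmin ⟨hyK, hy.trans hmx⟩⟩, hmx⟩

theorem measurableSet_leastInFiber (hK : IsCompact K) (hf : ContinuousOn f K) :
    MeasurableSet (leastInFiber f K) := by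
  rw [leastInFiber_eq, inter_iInter]
  refine .iInter fun q ↦ ?_
  have hclosed : IsClosed (K ∩ f ⁻¹' (f '' (K ∩ Iic (q : ℝ)))) :=
    hf.preimage_isClosed_of_isClosed hK.isClosed
      ((hK.inter_right isClosed_Iic).image_of_continuousOn (hf.mono inter_subset_left)).isClosed
  have hsplit : K ∩ (Ioi (q : ℝ) ∩ f ⁻¹' (f '' (K ∩ Iic (q : ℝ))))ᶜ =
      K \ (Ioi (q : ℝ) ∩ (K ∩ f ⁻¹' (f '' (K ∩ Iic (q : ℝ))))) := by
    ext x; simp +contextual [mem_inter_iff]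
  rw [hsplit]
  exact hK.measurableSet.diff (measurableSet_Ioi.inter hclosed.measurableSet)

end LeastInFiber

theorem exists_posMeasure_injOn_subset_general
    (F : ℝ → ℝ) (hF_meas : Measurable F)
    (hF_null : ∀ A ⊆ Icc (0:ℝ) 1, MeasurableSet A → (volume A = 0 ↔ volume (F '' A) = 0)) :
    ∀ Y₀ ⊆ Icc (0:ℝ) 1, MeasurableSet Y₀ → 0 < volume Y₀ →
      ∃ Y₁ ⊆ Y₀, MeasurableSet Y₁ ∧ 0 < volume Y₁ ∧ InjOn F Y₁ := by
  intro Y₀ hY₀ hY₀_meas hY₀_pos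
  obtain ⟨K, hKY₀, hK_closed, hK_diff, hF_cont⟩ :=
    hF_meas.exists_isClosed_subset_measure_sdiff_lt_continuousOn hY₀_meas
      (measure_ne_top_of_subset (μ := volume) hY₀ (by simp)) hY₀_pos.ne'
  have hK : IsCompact K := isCompact_Icc.of_isClosed_subset hK_closed (hKY₀.trans hY₀)
  have hK_null : volume K ≠ 0 := fun h ↦ hK_diff.ne (measure_sdiff_null h)
  have hS_meas := measurableSet_leastInFiber hK hF_cont
  have hSK : leastInFiber F K ⊆ Y₀ := leastInFiber_subset.trans hKY₀
  refine ⟨leastInFiber F K, hSK, hS_meas, pos_iff_ne_zero.2 fun hS_null ↦ hK_null ?_,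
    injOn_leastInFiber⟩
  rw [hF_null K (hKY₀.trans hY₀) hK.measurableSet, ← image_leastInFiber hK hF_cont]
  exact (hF_null _ (hSK.trans hY₀) hS_meas).1 hS_null

/-- A measurable function `F : [0,1] → [0,1]` preserving null sets in both directions is
injective on a positive measure subset of any given set of positive Lebesgue measure. -/
theorem exists_posMeasure_injOn_subset
    (F : ℝ → ℝ) (hF_meas : Measurable F)
    (hF_maps : MapsTo F (Icc (0:ℝ) 1) (Icc (0:ℝ) 1))
    (hF_null : ∀ A ⊆ Icc (0:ℝ) 1, MeasurableSet A → (volume A = 0 ↔ volume (F '' A) = 0)) :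
    ∀ Y₀ ⊆ Icc (0:ℝ) 1, MeasurableSet Y₀ → 0 < volume Y₀ →
      ∃ Y₁ ⊆ Y₀, MeasurableSet Y₁ ∧ 0 < volume Y₁ ∧ InjOn F Y₁ :=
  exists_posMeasure_injOn_subset_general F hF_meas hF_null
end

section
/- Let μ be a finite Borel measure on the circle ℝ/ℤ (equivalently, on [0,1) with addition mod 1). Then μ is non-atomic (μ({x}) = 0 for every point x) if and only if there exists a set S ⊆ ℤ of full density, i.e. lim_{n→∞} #(S ∩ [-n,n]) / (2n+1) = 1, such that the Fourier coefficients μ̂(k) = ∫ e^{2πikt} dμ(t) tend to 0 as |k| → ∞ along k ∈ S. -/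
/-!
With the Dirichlet kernel `D n x = ∑_{|k| ≤ n} e(k x)`, expanding `|μ̂ k|² = μ̂ k · conj (μ̂ k)`
gives `∑_{|k| ≤ n} |μ̂ k|² = ∬ D n (x - y) dμ(x) dμ(y)`, and `D n / (2n + 1)` converges boundedly
to the indicator of `0`, so by dominated convergence the symmetric Cesàro means of `|μ̂|²` tend to
`(μ × μ)(diagonal)` (Wiener). This vanishes exactly when `μ` has no atoms. For a bounded
nonnegative sequence, Cesàro means tending to `0` is equivalent to convergence to `0` along a set
of full density: one direction discards the density-zero complement, the other is Markov's
inequality with a threshold that decreases to `0` slowly enough.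
-/

open MeasureTheory Filter Topology ComplexConjugate

theorem tendsto_two_mul_add_one_atTop : Tendsto (fun n : ℕ => (2 * n + 1 : ℝ)) atTop atTop :=
  tendsto_atTop_add_const_right _ _ (tendsto_natCast_atTop_atTop.const_mul_atTop two_pos)

theorem norm_two_mul_add_one (n : ℕ) : ‖(2 * n + 1 : ℂ)‖ = 2 * n + 1 := by
  exact_mod_cast Complex.norm_natCast (2 * n + 1)

theorem exists_antitone_pos_majorant_of_tendsto_zero {b : ℕ → ℝ} (hb : Tendsto b atTop (𝓝 0)) :
    ∃ d : ℕ → ℝ, Antitone d ∧ (∀ n, 0 < d n) ∧ Tendsto d atTop (𝓝 0) ∧ ∀ n, b n ≤ d n := by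
  set c : ℕ → ℝ := fun n => ⨆ m, |b (m + n)|
  have hbdd : ∀ n, BddAbove (Set.range fun m => |b (m + n)|) := fun n =>
    hb.abs.bddAbove_range.mono (Set.range_comp_subset_range (· + n) fun m => |b m|)
  have hc_ge : ∀ n, |b n| ≤ c n := fun n => by
    simpa using le_ciSup (hbdd n) 0
  have hc_anti : Antitone c := antitone_nat_of_succ_le fun n =>
    ciSup_le fun m => by simpa only [add_assoc, add_comm 1 n] using le_ciSup (hbdd n) (m + 1)
  have hc_lim : Tendsto c atTop (𝓝 0) := by
    rw [Metric.tendsto_atTop]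
    intro ε hε
    obtain ⟨N, hN⟩ := Metric.tendsto_atTop.1 hb (ε / 2) (half_pos hε)
    refine ⟨N, fun n hn => ?_⟩
    rw [Real.dist_0_eq_abs, abs_of_nonneg ((abs_nonneg _).trans (hc_ge n))]
    refine (ciSup_le fun m => ?_).trans_lt (half_lt_self hε)
    simpa [Real.dist_0_eq_abs] using (hN (m + n) (by omega)).le
  refine ⟨fun n => c n + 1 / (n + 1), hc_anti.add fun i j hij => ?_, fun n => ?_, ?_, fun n => ?_⟩
  · gcongr
  · exact add_pos_of_nonneg_of_pos ((abs_nonneg _).trans (hc_ge n)) Nat.one_div_pos_of_nat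
  · simpa using hc_lim.add tendsto_one_div_add_atTop_nhds_zero_nat
  · linarith [le_abs_self (b n), hc_ge n, (Nat.one_div_pos_of_nat : 0 < 1 / ((n : ℝ) + 1))]

theorem MeasureTheory.Measure.prod_self_diagonal_eq_zero_iff {α : Type*} [MeasurableSpace α]
    [MeasurableEq α] (μ : Measure α) [SFinite μ] :
    μ.prod μ (Set.diagonal α) = 0 ↔ ∀ x, μ {x} = 0 := by
  refine ⟨fun h x => mul_self_eq_zero.1 ?_, fun h => ?_⟩
  · rw [← Measure.prod_prod]
    exact measure_mono_null (by simp [Set.subset_def]) h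
  · have hslice : ∀ x : α, Prod.mk x ⁻¹' Set.diagonal α = {x} := fun x => by
      ext y; simp [eq_comm]
    simp [Measure.prod_apply measurableSet_diagonal, hslice, h]

noncomputable def symmetricMean (a : ℤ → ℝ) (n : ℕ) : ℝ :=
  (∑ k ∈ Finset.Icc (-(n : ℤ)) n, a k) / (2 * n + 1)

def HasFullDensity (S : Set ℤ) : Prop :=
  Tendsto (fun n : ℕ => ((S ∩ Set.Icc (-(n : ℤ)) n).ncard : ℝ) / (2 * n + 1)) atTop (𝓝 1)

def TendstoZeroAlong (a : ℤ → ℝ) (S : Set ℤ) : Prop :=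
  ∀ ε > (0 : ℝ), ∃ N : ℕ, ∀ k ∈ S, (N : ℤ) ≤ |k| → a k < ε

theorem tendstoZeroAlong_sq_iff {a : ℤ → ℝ} {S : Set ℤ} (ha : ∀ k, 0 ≤ a k) :
    TendstoZeroAlong (fun k => a k ^ 2) S ↔ TendstoZeroAlong a S := by
  refine ⟨fun h ε hε => ?_, fun h ε hε => ?_⟩
  · obtain ⟨N, hN⟩ := h (ε ^ 2) (by positivity)
    exact ⟨N, fun k hk hNk => (pow_lt_pow_iff_left₀ (ha k) hε.le two_ne_zero).1 (hN k hk hNk)⟩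
  · obtain ⟨N, hN⟩ := h √ε (Real.sqrt_pos.2 hε)
    exact ⟨N, fun k hk hNk => (Real.lt_sqrt (ha k)).1 (hN k hk hNk)⟩

theorem card_Icc_neg_self (n : ℕ) : ((Finset.Icc (-(n : ℤ)) n).card : ℝ) = 2 * n + 1 := by
  rw [Int.card_Icc, show (n : ℤ) + 1 - -n = ((2 * n + 1 : ℕ) : ℤ) by push_cast; ring,
    Int.toNat_natCast]
  push_cast; ring

section SymmetricMean

variable {a b : ℤ → ℝ} (n : ℕ)

theorem symmetricMean_const (c : ℝ) : symmetricMean (fun _ => c) n = c := by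
  rw [symmetricMean, Finset.sum_const, nsmul_eq_mul, card_Icc_neg_self]
  field_simp

theorem symmetricMean_sub :
    symmetricMean (a - b) n = symmetricMean a n - symmetricMean b n := by
  simp only [symmetricMean, Pi.sub_apply, Finset.sum_sub_distrib, sub_div]

theorem symmetricMean_add :
    symmetricMean (a + b) n = symmetricMean a n + symmetricMean b n := by
  simp only [symmetricMean, Pi.add_apply, Finset.sum_add_distrib, add_div]

theorem symmetricMean_const_mul (c : ℝ) :
    symmetricMean (fun k => c * a k) n = c * symmetricMean a n := by
  simp only [symmetricMean, ← Finset.mul_sum, mul_div_assoc]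

theorem symmetricMean_div_const (c : ℝ) :
    symmetricMean (fun k => a k / c) n = symmetricMean a n / c := by
  simp only [symmetricMean, ← Finset.sum_div, div_right_comm]

theorem symmetricMean_le_symmetricMean (h : ∀ k ∈ Finset.Icc (-(n : ℤ)) n, a k ≤ b k) :
    symmetricMean a n ≤ symmetricMean b n :=
  div_le_div_of_nonneg_right (Finset.sum_le_sum h) (by positivity)

theorem symmetricMean_nonneg (h : ∀ k, 0 ≤ a k) : 0 ≤ symmetricMean a n :=
  div_nonneg (Finset.sum_nonneg fun k _ => h k) (by positivity)

theorem symmetricMean_indicator_one (S : Set ℤ) :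
    symmetricMean (S.indicator 1) n = ((S ∩ Set.Icc (-(n : ℤ)) n).ncard : ℝ) / (2 * n + 1) := by
  classical
  rw [symmetricMean, Finset.sum_indicator_eq_sum_filter]
  simp only [Pi.one_apply, Finset.sum_const, nsmul_one]
  rw [← Set.ncard_coe_finset, Finset.coe_filter]
  congr 3
  ext k
  simp only [Set.mem_ofPred_eq, Finset.mem_Icc, Set.mem_inter_iff, Set.mem_Icc]
  tauto

theorem hasFullDensity_iff {S : Set ℤ} :
    HasFullDensity S ↔ Tendsto (symmetricMean (Sᶜ.indicator 1)) atTop (𝓝 0) := by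
  have h : symmetricMean (Sᶜ.indicator 1) = fun n => 1 - symmetricMean (S.indicator 1) n := by
    ext n
    rw [Set.indicator_compl, symmetricMean_sub, show (1 : ℤ → ℝ) = fun _ => 1 from rfl,
      symmetricMean_const]
  simp_rw [HasFullDensity, h, ← symmetricMean_indicator_one]
  constructor <;> intro h' <;> simpa using (tendsto_const_nhds (x := (1 : ℝ))).sub h'

theorem tendsto_symmetricMean_indicator_Icc (N : ℕ) :
    Tendsto (symmetricMean ((Set.Icc (-(N : ℤ)) N).indicator 1)) atTop (𝓝 0) := by
  refine squeeze_zero (g := fun n : ℕ => (2 * N + 1 : ℝ) / (2 * n + 1))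
    (fun n => symmetricMean_nonneg n (Set.indicator_nonneg fun _ _ => zero_le_one))
    (fun n => ?_) (tendsto_const_nhds.div_atTop tendsto_two_mul_add_one_atTop)
  · rw [symmetricMean_indicator_one]
    gcongr
    rw [← card_Icc_neg_self, ← Set.ncard_coe_finset, Finset.coe_Icc]
    exact_mod_cast Set.ncard_le_ncard Set.inter_subset_left (Set.finite_Icc _ _)

end SymmetricMean

theorem exists_hasFullDensity_tendstoZeroAlong {a : ℤ → ℝ} (ha : ∀ k, 0 ≤ a k)
    (h : Tendsto (symmetricMean a) atTop (𝓝 0)) :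
    ∃ S, HasFullDensity S ∧ TendstoZeroAlong a S := by
  obtain ⟨d, hd_anti, hd_pos, hd_lim, hd_ge⟩ := exists_antitone_pos_majorant_of_tendsto_zero h
  set t : ℕ → ℝ := fun n => √(d n)
  have ht_anti : Antitone t := fun i j hij => Real.sqrt_le_sqrt (hd_anti hij)
  have ht_pos : ∀ n, 0 < t n := fun n => Real.sqrt_pos.2 (hd_pos n)
  have ht_lim : Tendsto t atTop (𝓝 0) := by
    have := (Real.continuous_sqrt.tendsto 0).comp hd_lim
    rwa [Real.sqrt_zero] at this
  refine ⟨{k | a k ≤ t k.natAbs}, hasFullDensity_iff.2 ?_, fun ε hε => ?_⟩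
  · refine squeeze_zero
      (fun n => symmetricMean_nonneg n (Set.indicator_nonneg fun _ _ => zero_le_one))
      (fun n => ?_) ht_lim
    -- Markov's inequality, using that `t` is antitone
    have markov : ∀ k ∈ Finset.Icc (-(n : ℤ)) n,
        {k | a k ≤ t k.natAbs}ᶜ.indicator 1 k ≤ a k / t n := fun k hk => by
      by_cases hkS : a k ≤ t k.natAbs
      · simpa [hkS] using div_nonneg (ha k) (ht_pos n).le
      · have hkn : k.natAbs ≤ n := by rw [Finset.mem_Icc] at hk; omega
        simpa [hkS, one_le_div (ht_pos n)] using (ht_anti hkn).trans (not_le.1 hkS).le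
    calc symmetricMean ({k | a k ≤ t k.natAbs}ᶜ.indicator 1) n
        ≤ symmetricMean (fun k => a k / t n) n := symmetricMean_le_symmetricMean n markov
      _ = symmetricMean a n / t n := symmetricMean_div_const n (t n)
      _ ≤ d n / t n := by gcongr; exact hd_ge n
      _ = t n := Real.div_sqrt
  · obtain ⟨N, hN⟩ := eventually_atTop.1 (ht_lim.eventually (gt_mem_nhds hε))
    refine ⟨N, fun k hk hNk =>
      ((show a k ≤ t k.natAbs from hk).trans (ht_anti ?_)).trans_lt (hN N le_rfl)⟩
    rw [Int.abs_eq_natAbs] at hNk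
    exact_mod_cast hNk

theorem tendsto_symmetricMean_of_tendstoZeroAlong {a : ℤ → ℝ} {M : ℝ} {S : Set ℤ}
    (ha : ∀ k, 0 ≤ a k) (hM : ∀ k, a k ≤ M) (hS : HasFullDensity S) (h : TendstoZeroAlong a S) :
    Tendsto (symmetricMean a) atTop (𝓝 0) := by
  refine tendsto_order.2 ⟨fun δ hδ => Eventually.of_forall fun n =>
    hδ.trans_le (symmetricMean_nonneg n ha), fun δ hδ => ?_⟩
  obtain ⟨N, hN⟩ := h (δ / 2) (half_pos hδ)
  set bad : ℤ → ℝ := Sᶜ.indicator 1 + (Set.Icc (-(N : ℤ)) N).indicator 1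
  have hbad : Tendsto (fun n => δ / 2 + M * symmetricMean bad n) atTop (𝓝 (δ / 2)) := by
    have := (hasFullDensity_iff.1 hS).add (tendsto_symmetricMean_indicator_Icc N)
    simpa [bad, symmetricMean_add] using tendsto_const_nhds.add (this.const_mul M)
  filter_upwards [hbad.eventually (gt_mem_nhds (half_lt_self hδ))] with n hn
  refine lt_of_le_of_lt ?_ hn
  rw [← symmetricMean_const_mul, ← symmetricMean_const n (δ / 2), ← symmetricMean_add]
  refine symmetricMean_le_symmetricMean n fun k _ => ?_
  have hM0 : 0 ≤ M := (ha 0).trans (hM 0)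
  by_cases hk : k ∈ S ∧ (N : ℤ) ≤ |k|
  · have : 0 ≤ bad k := add_nonneg (Set.indicator_nonneg (fun _ _ => zero_le_one) k)
      (Set.indicator_nonneg (fun _ _ => zero_le_one) k)
    simp only [Pi.add_apply]
    nlinarith [hN k hk.1 hk.2]
  · have : 1 ≤ bad k := by
      rcases not_and_or.1 hk with hkS | hkN
      · simp [bad, hkS, Set.indicator_nonneg]
      · rw [not_le, abs_lt] at hkN
        simp only [bad, Pi.add_apply,
          Set.indicator_of_mem (show k ∈ Set.Icc (-(N : ℤ)) N from ⟨hkN.1.le, hkN.2.le⟩)]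
        simp [Set.indicator_nonneg]
    simp only [Pi.add_apply]
    nlinarith [hM k, half_pos hδ]

theorem norm_sum_Icc_neg_self_zpow_le {z : ℂ} (hz : ‖z‖ = 1) (hz1 : z ≠ 1) (n : ℕ) :
    ‖∑ k ∈ Finset.Icc (-(n : ℤ)) n, z ^ k‖ ≤ 2 / ‖z - 1‖ := by
  have hz0 : z ≠ 0 := by rintro rfl; simp at hz
  have hsum : ∑ k ∈ Finset.Icc (-(n : ℤ)) n, z ^ k
      = z ^ (-(n : ℤ)) * ((z ^ (2 * n + 1) - 1) / (z - 1)) := by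
    rw [Int.Icc_eq_finset_map, Finset.sum_map, ← geom_sum_eq hz1, Finset.mul_sum,
      show (n + 1 - -n : ℤ).toNat = 2 * n + 1 by omega]
    refine Finset.sum_congr rfl fun i _ => ?_
    simp [zpow_add₀ hz0]
  rw [hsum, norm_mul, norm_zpow, hz, one_zpow, one_mul, norm_div]
  gcongr
  calc ‖z ^ (2 * n + 1) - 1‖ ≤ ‖z ^ (2 * n + 1)‖ + ‖(1 : ℂ)‖ := norm_sub_le _ _
    _ = 2 := by rw [norm_pow, hz, one_pow, norm_one]; norm_num

section Dirichlet

variable {T : ℝ}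

theorem fourier_sub_eq_mul_conj (k : ℤ) (x y : AddCircle T) :
    fourier k (x - y) = fourier k x * conj (fourier k y) := by
  rw [sub_eq_add_neg, fourier_apply, smul_add, AddCircle.toCircle_add, Circle.coe_mul,
    ← fourier_apply, smul_neg, fourier_neg']

theorem integral_fourier_sub_prod (μ : Measure (AddCircle T)) [IsFiniteMeasure μ] (k : ℤ) :
    ∫ p, fourier k (p.1 - p.2) ∂μ.prod μ = ((‖∫ t, fourier k t ∂μ‖ ^ 2 : ℝ) : ℂ) := by
  simp_rw [fourier_sub_eq_mul_conj]
  rw [integral_prod_mul (fun t => fourier k t) (fun t => conj (fourier k t)), integral_conj,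
    RCLike.mul_conj]
  norm_cast

noncomputable def dirichletKernel (n : ℕ) (x : AddCircle T) : ℂ :=
  ∑ k ∈ Finset.Icc (-(n : ℤ)) n, fourier k x

theorem continuous_dirichletKernel (n : ℕ) : Continuous (dirichletKernel (T := T) n) :=
  continuous_finsetSum _ fun k _ => map_continuous (fourier k)

theorem dirichletKernel_zero (n : ℕ) : dirichletKernel n (0 : AddCircle T) = 2 * n + 1 := by
  simp only [dirichletKernel, fourier_eval_zero, Finset.sum_const, nsmul_one]
  exact_mod_cast card_Icc_neg_self n

theorem norm_dirichletKernel_le (n : ℕ) (x : AddCircle T) : ‖dirichletKernel n x‖ ≤ 2 * n + 1 :=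
  calc ‖dirichletKernel n x‖ ≤ ∑ k ∈ Finset.Icc (-(n : ℤ)) n, ‖fourier k x‖ := norm_sum_le _ _
    _ = 2 * n + 1 := by
      simp only [fourier_apply, Circle.norm_coe, Finset.sum_const, nsmul_one, card_Icc_neg_self]

theorem norm_dirichletKernel_le_of_ne_zero [hT : Fact (0 < T)] {x : AddCircle T} (hx : x ≠ 0)
    (n : ℕ) :
    ‖dirichletKernel n x‖ ≤ 2 / ‖(AddCircle.toCircle x : ℂ) - 1‖ := by
  have hx1 : (AddCircle.toCircle x : ℂ) ≠ 1 := fun h => hx <|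
    AddCircle.injective_toCircle hT.out.ne' (by ext; simpa using h)
  simpa [dirichletKernel, fourier_apply, AddCircle.toCircle_zsmul] using
    norm_sum_Icc_neg_self_zpow_le (Circle.norm_coe _) hx1 n

theorem tendsto_dirichletKernel_div [Fact (0 < T)] (x : AddCircle T) :
    Tendsto (fun n : ℕ => dirichletKernel n x / (2 * n + 1)) atTop
      (𝓝 (({0} : Set (AddCircle T)).indicator 1 x)) := by
  by_cases hx : x = 0
  · subst hx
    refine tendsto_const_nhds.congr fun n => ?_
    rw [dirichletKernel_zero, div_self (by exact_mod_cast (2 * n).succ_ne_zero)]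
    simp
  · rw [Set.indicator_of_notMem (show x ∉ ({0} : Set (AddCircle T)) from hx)]
    refine squeeze_zero_norm
      (a := fun n : ℕ => 2 / ‖(AddCircle.toCircle x : ℂ) - 1‖ / (2 * n + 1)) (fun n => ?_)
      (tendsto_const_nhds.div_atTop tendsto_two_mul_add_one_atTop)
    rw [norm_div, norm_two_mul_add_one]
    gcongr
    exact norm_dirichletKernel_le_of_ne_zero hx n

theorem tendsto_symmetricMean_sq_norm_fourier_integral [Fact (0 < T)]
    (μ : Measure (AddCircle T)) [IsFiniteMeasure μ] :
    Tendsto (symmetricMean fun k => ‖∫ t, fourier k t ∂μ‖ ^ 2) atTop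
      (𝓝 ((μ.prod μ).real (Set.diagonal _))) := by
  set F : ℕ → AddCircle T × AddCircle T → ℂ :=
    fun n p => dirichletKernel n (p.1 - p.2) / (2 * n + 1)
  have hF : ∀ n,
      ∫ p, F n p ∂μ.prod μ = symmetricMean (fun k => ‖∫ t, fourier k t ∂μ‖ ^ 2) n := by
    intro n
    simp only [F, dirichletKernel, integral_div]
    rw [integral_finsetSum _ fun k _ =>
      Continuous.integrable_of_hasCompactSupport (by fun_prop) (.of_compactSpace _)]
    simp_rw [integral_fourier_sub_prod]
    push_cast [symmetricMean]
    rfl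
  have hlim : Tendsto (fun n => ∫ p, F n p ∂μ.prod μ) atTop
      (𝓝 (∫ p, (((Set.diagonal _).indicator 1 p : ℝ) : ℂ) ∂μ.prod μ)) := by
    refine tendsto_integral_of_dominated_convergence (fun _ => 1)
      (fun n =>
        (((continuous_dirichletKernel n).comp continuous_sub).div_const _).aestronglyMeasurable)
      (integrable_const 1) (fun n => ae_of_all _ fun p => ?_) (ae_of_all _ fun p => ?_)
    · rw [norm_div, norm_two_mul_add_one, div_le_one (by positivity)]
      exact norm_dirichletKernel_le n _
    · convert tendsto_dirichletKernel_div (p.1 - p.2) using 2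
      by_cases h : p.1 = p.2 <;> simp [h, sub_eq_zero]
  rw [integral_complex_ofReal, integral_indicator_one measurableSet_diagonal] at hlim
  simp_rw [hF] at hlim
  exact Filter.tendsto_ofReal_iff.1 hlim

end Dirichlet

theorem tendsto_symmetricMean_zero_iff {a : ℤ → ℝ} {M : ℝ} (ha : ∀ k, 0 ≤ a k)
    (hM : ∀ k, a k ≤ M) :
    Tendsto (symmetricMean a) atTop (𝓝 0) ↔ ∃ S, HasFullDensity S ∧ TendstoZeroAlong a S :=
  ⟨exists_hasFullDensity_tendstoZeroAlong ha, fun ⟨_, hS, h⟩ =>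
    tendsto_symmetricMean_of_tendstoZeroAlong ha hM hS h⟩

/-- Wiener's theorem: a finite Borel measure on the circle `ℝ/ℤ` is non-atomic iff its
Fourier coefficients tend to `0` along a set of integers of full density. -/
theorem wiener_nonatomic_iff_fourier_tendsto_zero_along_full_density
    (μ : Measure UnitAddCircle) [IsFiniteMeasure μ] :
    (∀ x : UnitAddCircle, μ {x} = 0) ↔
      ∃ S : Set ℤ,
        Filter.Tendsto
          (fun n : ℕ => ((S ∩ Set.Icc (-(n : ℤ)) (n : ℤ)).ncard : ℝ) / (2 * n + 1))
          Filter.atTop (nhds 1) ∧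
        ∀ ε > (0 : ℝ), ∃ N : ℕ, ∀ k ∈ S, (N : ℤ) ≤ |k| →
          ‖∫ t, fourier k t ∂μ‖ < ε := by
  set a : ℤ → ℝ := fun k => ‖∫ t, fourier k t ∂μ‖
  have hW := tendsto_symmetricMean_sq_norm_fourier_integral μ
  have ha_le : ∀ k, a k ^ 2 ≤ μ.real Set.univ ^ 2 := fun k => by
    gcongr
    simpa [a, fourier_apply] using norm_integral_le_of_norm_le_const (μ := μ)
      (ae_of_all _ fun t => (Circle.norm_coe (AddCircle.toCircle (k • t))).le)
  calc (∀ x, μ {x} = 0) ↔ μ.prod μ (Set.diagonal _) = 0 :=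
        (Measure.prod_self_diagonal_eq_zero_iff μ).symm
    _ ↔ Tendsto (symmetricMean fun k => a k ^ 2) atTop (𝓝 0) := by
        rw [← measureReal_eq_zero_iff]
        exact ⟨fun h => h ▸ hW, tendsto_nhds_unique hW⟩
    _ ↔ ∃ S, HasFullDensity S ∧ TendstoZeroAlong (fun k => a k ^ 2) S :=
        tendsto_symmetricMean_zero_iff (fun k => sq_nonneg _) ha_le
    _ ↔ ∃ S, HasFullDensity S ∧ TendstoZeroAlong a S :=
        exists_congr fun _ => and_congr_right fun _ =>
          tendstoZeroAlong_sq_iff fun _ => norm_nonneg _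
end
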